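/- arXiv:2302.12408 — 10 statements merged into one kernel-verified Lean document; each statement's English description precedes it below -/
import Mathlib

section
/- Let X be a topological space, κ an infinite cardinal, and {U_α : α < κ} a cellular family in X indexed faithfully by κ. Then ℵ_κ is not a weak precaliber for X. If, in addition, for every α < κ the subspace U_α satisfies o(U_α) ≥ ℵ_α, then ℵ_κ is not a weak precaliber* for X. -/
open Cardinal Set

universe u

/-- `κ` is a caliber for `X`: every κ-indexed family of non-empty open sets
(repetitions allowed) has a κ-sized subfamily with non-empty intersection. -/
def IsCaliber (X : Type u) [TopologicalSpace X] (κ : Cardinal.{u}) : Prop :=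
  ∀ {ι : Type u} (U : ι → Set X), #ι = κ → (∀ i, IsOpen (U i)) → (∀ i, (U i).Nonempty) →
    ∃ J : Set ι, #J = κ ∧ (⋂ i ∈ J, U i).Nonempty

/-- `κ` is a precaliber for `X`: every κ-indexed family of non-empty open sets
has a κ-sized subfamily which is centered. -/
def IsPrecaliber (X : Type u) [TopologicalSpace X] (κ : Cardinal.{u}) : Prop :=
  ∀ {ι : Type u} (U : ι → Set X), #ι = κ → (∀ i, IsOpen (U i)) → (∀ i, (U i).Nonempty) →
    ∃ J : Set ι, #J = κ ∧
      ∀ s : Finset ι, ↑s ⊆ J → s.Nonempty → (⋂ i ∈ s, U i).Nonempty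

/-- `κ` is a weak precaliber for `X`: every κ-indexed family of non-empty open sets
has a κ-sized subfamily which is linked. -/
def IsWeakPrecaliber (X : Type u) [TopologicalSpace X] (κ : Cardinal.{u}) : Prop :=
  ∀ {ι : Type u} (U : ι → Set X), #ι = κ → (∀ i, IsOpen (U i)) → (∀ i, (U i).Nonempty) →
    ∃ J : Set ι, #J = κ ∧ ∀ i ∈ J, ∀ j ∈ J, (U i ∩ U j).Nonempty

/-- `κ` is a caliber* for `X`: every family of non-empty open sets of cardinality `κ`
has a subfamily of cardinality `κ` with non-empty intersection. -/
def IsCaliberStar (X : Type u) [TopologicalSpace X] (κ : Cardinal.{u}) : Prop :=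
  ∀ 𝒰 : Set (Set X), #𝒰 = κ → (∀ U ∈ 𝒰, IsOpen U) → (∀ U ∈ 𝒰, U.Nonempty) →
    ∃ 𝒱 ⊆ 𝒰, #𝒱 = κ ∧ (⋂₀ 𝒱).Nonempty

/-- `κ` is a precaliber* for `X`: every family of non-empty open sets of cardinality `κ`
has a centered subfamily of cardinality `κ`. -/
def IsPrecaliberStar (X : Type u) [TopologicalSpace X] (κ : Cardinal.{u}) : Prop :=
  ∀ 𝒰 : Set (Set X), #𝒰 = κ → (∀ U ∈ 𝒰, IsOpen U) → (∀ U ∈ 𝒰, U.Nonempty) →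
    ∃ 𝒱 ⊆ 𝒰, #𝒱 = κ ∧
      ∀ s : Finset (Set X), ↑s ⊆ 𝒱 → s.Nonempty → (⋂₀ (↑s : Set (Set X))).Nonempty

/-- `κ` is a weak precaliber* for `X`: every family of non-empty open sets of
cardinality `κ` has a linked subfamily of cardinality `κ`. -/
def IsWeakPrecaliberStar (X : Type u) [TopologicalSpace X] (κ : Cardinal.{u}) : Prop :=
  ∀ 𝒰 : Set (Set X), #𝒰 = κ → (∀ U ∈ 𝒰, IsOpen U) → (∀ U ∈ 𝒰, U.Nonempty) →
    ∃ 𝒱 ⊆ 𝒰, #𝒱 = κ ∧ ∀ U ∈ 𝒱, ∀ V ∈ 𝒱, (U ∩ V).Nonempty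

/-- `o X` : the number of open subsets of `X`. -/
def oCard (X : Type u) [TopologicalSpace X] : Cardinal.{u} :=
  #{U : Set X | IsOpen U}

/-- A cellular family: a pairwise disjoint collection of non-empty open sets. -/
def IsCellularFamily (X : Type u) [TopologicalSpace X] (𝒰 : Set (Set X)) : Prop :=
  (∀ U ∈ 𝒰, IsOpen U) ∧ (∀ U ∈ 𝒰, U.Nonempty) ∧ 𝒰.Pairwise Disjoint

/-!
Since `κ` is a limit ordinal, `ℵ_κ = sup_{α<κ} ℵ_α`, so one can list `ℵ_κ` nonempty open sets
of which at most `ℵ_α` lie in the cell `U_α`: with repetitions, by repeating `U_α` itself `ℵ_α`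
times; without repetitions, by picking `ℵ_α` distinct nonempty open subsets of `U_α`, which
`o(U_α) ≥ ℵ_α` allows. Members of a linked subfamily meet pairwise, hence all lie in one cell,
so the subfamily has at most `ℵ_α < ℵ_κ` members.
-/

open Function Ordinal Order

theorem Pairwise.eq_of_subset_of_subset {ι X : Type*} {U : ι → Set X}
    (hU : Pairwise (Disjoint on U)) {V W : Set X} {i j : ι} (hV : V ⊆ U i) (hW : W ⊆ U j)
    (h : (V ∩ W).Nonempty) : i = j :=
  by_contra fun hij => not_disjoint_iff_nonempty_inter.2 h ((hU hij).mono hV hW)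

theorem Cardinal.mk_setOf_typein_lt_le {α : Type u} [LinearOrder α] [WellFoundedLT α]
    (p : Ordinal.{u}) : #{x : α | typein (α := α) (· < ·) x < p} ≤ p.card := by
  have hinj : Injective fun x : {x : α | typein (α := α) (· < ·) x < p} =>
      ToType.mk (⟨typein (α := α) (· < ·) x.1, x.2⟩ : Iio p) := fun x y h =>
    Subtype.ext (typein_injective _ (congrArg Subtype.val (ToType.mk.injective h)))
  exact (mk_le_of_injective hinj).trans_eq (mk_toType p)

theorem Cardinal.le_mk_sdiff_singleton {α : Type*} {A : Set α} {c : Cardinal} (hc : ℵ₀ ≤ c)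
    (h : c ≤ #A) (a : α) : c ≤ #↥(A \ {a}) := by
  refine le_of_not_gt fun hlt => (h.trans (le_mk_sdiff_add_mk A {a})).not_gt ?_
  rw [mk_singleton]
  exact add_lt_of_lt hc hlt (one_lt_aleph0.trans_le hc)

theorem oCard_le_mk_isOpen_subset {X : Type u} [TopologicalSpace X] {s : Set X}
    (hs : IsOpen s) : oCard s ≤ #{V : Set X | IsOpen V ∧ V ⊆ s} := by
  have hinj : Injective fun W : {W : Set s | IsOpen W} =>
      (⟨(↑) '' W.1, hs.isOpenMap_subtype_val _ W.2, Subtype.coe_image_subset s W.1⟩ :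
        {V : Set X | IsOpen V ∧ V ⊆ s}) := fun W₁ W₂ h =>
    Subtype.ext (Subtype.coe_injective.image_injective (congrArg Subtype.val h))
  exact mk_le_of_injective hinj

theorem exists_mk_fiber_le_aleph {o : Ordinal.{u}} (ho : IsSuccLimit o) :
    ∃ (ι : Type u) (g : ι → {a // a < o}), #ι = ℵ_ o ∧ ∀ a, #(g ⁻¹' {a}) ≤ ℵ_ a.1 := by
  let ι := (ℵ_ o).ord.ToType
  have hcell : ∀ x : ι, ∃ a : {a // a < o}, typein (α := ι) (· < ·) x < (ℵ_ a.1).ord := by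
    intro x
    obtain ⟨a, ha, hx⟩ := (isNormal_aleph.lt_iff_exists_lt ho).1 (lt_ord.1 (typein_lt_self x))
    exact ⟨⟨a, ha⟩, lt_ord.2 hx⟩
  choose g hg using hcell
  refine ⟨ι, g, mk_ord_toType _, fun a => ?_⟩
  calc #(g ⁻¹' {a}) ≤ #{x : ι | typein (α := ι) (· < ·) x < (ℵ_ a.1).ord} :=
        mk_le_mk_of_subset fun x hx => (hx : g x = a) ▸ hg x
    _ ≤ ℵ_ a.1 := (mk_setOf_typein_lt_le _).trans_eq (card_ord _)

theorem not_isWeakPrecaliber_aleph {X : Type u} [TopologicalSpace X] {o : Ordinal.{u}}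
    (ho : IsSuccLimit o) (U : {a // a < o} → Set X) (hopen : ∀ a, IsOpen (U a))
    (hne : ∀ a, (U a).Nonempty) (hU : Pairwise (Disjoint on U)) :
    ¬ IsWeakPrecaliber X (ℵ_ o) := by
  intro hwp
  obtain ⟨ι, g, hι, hg⟩ := exists_mk_fiber_le_aleph ho
  obtain ⟨J, hJ, hlink⟩ := hwp (U ∘ g) hι (fun _ => hopen _) (fun _ => hne _)
  obtain ⟨j₀, hj₀⟩ : J.Nonempty :=
    nonempty_coe_sort.1 (mk_ne_zero_iff.1 (hJ ▸ (aleph_pos o).ne'))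
  have hJg : J ⊆ g ⁻¹' {g j₀} := fun j hj =>
    hU.eq_of_subset_of_subset subset_rfl subset_rfl (hlink j hj j₀ hj₀)
  have : ℵ_ o ≤ ℵ_ (g j₀).1 := hJ ▸ (mk_le_mk_of_subset hJg).trans (hg _)
  exact this.not_gt (aleph_lt_aleph.2 (g j₀).2)

theorem not_isWeakPrecaliberStar_aleph {X : Type u} [TopologicalSpace X] {o : Ordinal.{u}}
    (ho : IsSuccLimit o) (U : {a // a < o} → Set X) (hopen : ∀ a, IsOpen (U a))
    (hU : Pairwise (Disjoint on U)) (hoc : ∀ a, ℵ_ a.1 ≤ oCard (U a)) :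
    ¬ IsWeakPrecaliberStar X (ℵ_ o) := by
  intro hwps
  have hS : ∀ a, ∃ S ⊆ {V : Set X | IsOpen V ∧ V ⊆ U a} \ {∅}, #S = ℵ_ a.1 := fun a =>
    le_mk_iff_exists_subset.1 <| le_mk_sdiff_singleton (aleph0_le_aleph _)
      ((hoc a).trans (oCard_le_mk_isOpen_subset (hopen a))) ∅
  choose S hSsub hScard using hS
  have hSU : ℵ_ o ≤ #(⋃ a, S a) := (isNormal_aleph.le_iff_forall_le ho).2 fun a ha =>
    hScard ⟨a, ha⟩ ▸ mk_le_mk_of_subset (subset_iUnion S ⟨a, ha⟩)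
  obtain ⟨𝒰, h𝒰S, h𝒰⟩ := le_mk_iff_exists_subset.1 hSU
  have hmem : ∀ V ∈ 𝒰, ∃ a, V ∈ S a := fun V hV => mem_iUnion.1 (h𝒰S hV)
  obtain ⟨𝒱, h𝒱𝒰, h𝒱, hlink⟩ := hwps 𝒰 h𝒰
    (fun V hV => (hSsub _ (hmem V hV).choose_spec).1.1)
    (fun V hV => nonempty_iff_ne_empty.2 (hSsub _ (hmem V hV).choose_spec).2)
  obtain ⟨V₀, hV₀⟩ : 𝒱.Nonempty :=
    nonempty_coe_sort.1 (mk_ne_zero_iff.1 (h𝒱 ▸ (aleph_pos o).ne'))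
  obtain ⟨a₀, ha₀⟩ := hmem V₀ (h𝒱𝒰 hV₀)
  have h𝒱S : 𝒱 ⊆ S a₀ := fun V hV => by
    obtain ⟨b, hb⟩ := hmem V (h𝒱𝒰 hV)
    have hba : b = a₀ :=
      hU.eq_of_subset_of_subset (hSsub b hb).1.2 (hSsub a₀ ha₀).1.2 (hlink V hV V₀ hV₀)
    exact hba ▸ hb
  have : ℵ_ o ≤ ℵ_ a₀.1 := h𝒱 ▸ hScard a₀ ▸ mk_le_mk_of_subset h𝒱S
  exact this.not_gt (aleph_lt_aleph.2 a₀.2)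

theorem stmt3_general (X : Type u) [TopologicalSpace X] (κ : Cardinal.{u}) (hκ : ℵ₀ ≤ κ)
    (U : {α : Ordinal.{u} // α < κ.ord} → Set X)
    (hopen : ∀ α, IsOpen (U α)) (hne : ∀ α, (U α).Nonempty)
    (hdisj : ∀ α β, α ≠ β → Disjoint (U α) (U β)) :
    ¬ IsWeakPrecaliber X (Cardinal.aleph κ.ord) ∧
      ((∀ α : {α : Ordinal.{u} // α < κ.ord}, Cardinal.aleph α.1 ≤ oCard ↥(U α)) →
        ¬ IsWeakPrecaliberStar X (Cardinal.aleph κ.ord)) := by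
  have hU : Pairwise (Disjoint on U) := fun a b hab => hdisj a b hab
  exact ⟨not_isWeakPrecaliber_aleph (isSuccLimit_ord hκ) U hopen hne hU,
    not_isWeakPrecaliberStar_aleph (isSuccLimit_ord hκ) U hopen hU⟩

theorem stmt3 (X : Type u) [TopologicalSpace X] (κ : Cardinal.{u}) (hκ : ℵ₀ ≤ κ)
    (U : {α : Ordinal.{u} // α < κ.ord} → Set X)
    (hinj : Function.Injective U)
    (hopen : ∀ α, IsOpen (U α)) (hne : ∀ α, (U α).Nonempty)
    (hdisj : ∀ α β, α ≠ β → Disjoint (U α) (U β)) :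
    ¬ IsWeakPrecaliber X (Cardinal.aleph κ.ord) ∧
      ((∀ α : {α : Ordinal.{u} // α < κ.ord}, Cardinal.aleph α.1 ≤ oCard ↥(U α)) →
        ¬ IsWeakPrecaliberStar X (Cardinal.aleph κ.ord)) :=
  stmt3_general X κ hκ U hopen hne hdisj
end

section
/- Let X be a topological space and κ a cardinal such that either κ = ω, or κ > ω and κ satisfies the partition relation κ → (κ)²₂ (i.e., κ is weakly compact). Then κ is a weak precaliber* for X if and only if every cellular family in X has cardinality less than κ. -/
open Cardinal Set

universe u

/-- The partition relation `κ → (κ)²₂`, phrased for symmetric 2-colorings of pairs. -/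
def PartitionRelTwo (κ : Cardinal.{u}) : Prop :=
  ∀ (S : Type u) (f : S → S → Bool), #S = κ → (∀ a b, f a b = f b a) →
    ∃ Y : Set S, #Y = κ ∧ ∃ c : Bool, ∀ a ∈ Y, ∀ b ∈ Y, a ≠ b → f a b = c

/-!
A linked family meets a cellular family in at most one member, so a weak precaliber* `κ > 1`
bounds all cellular families strictly below `κ`. Conversely, colour the pairs of a `κ`-sized
family of open sets by whether they meet: `κ → (κ)²₂` yields a homogeneous subfamily of size `κ`,
which is either linked or cellular, and the latter is excluded.

For `κ = ω` the partition relation is Ramsey's theorem. Fix a non-principal ultrafilter `l`;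
each point is `r`-related either to `l`-almost all points or to `l`-almost none, one of these
two classes lies in `l`, and a maximal homogeneous subset of it cannot be finite, since it could
be extended by any point of an `l`-large set.
-/

section Ramsey

variable {S : Type u} {r : S → S → Prop}

theorem exists_infinite_pairwise_of_le_cofinite {l : Filter S} [l.NeBot] (hl : l ≤ Filter.cofinite)
    (hr : ∀ a b, r a b → r b a) {A : Set S} (hA : A ∈ l) (hlink : ∀ a ∈ A, {b | r a b} ∈ l) :
    ∃ t ⊆ A, t.Infinite ∧ t.Pairwise r := by
  obtain ⟨t, ⟨htA, htr⟩, hmax⟩ : ∃ t, Maximal (fun t => t ⊆ A ∧ t.Pairwise r) t := by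
    refine zorn_subset _ fun C hC hchain => ⟨⋃₀ C, ⟨sUnion_subset fun t ht => (hC ht).1, ?_⟩,
      fun _ => subset_sUnion_of_mem⟩
    exact (pairwise_sUnion hchain.directedOn).2 fun t ht => (hC ht).2
  refine ⟨t, htA, fun htfin => ?_, htr⟩
  have hlinked : ⋂ a ∈ t, {b | r a b} ∈ l :=
    (Filter.biInter_mem htfin).2 fun a ha => hlink a (htA ha)
  have hnew : (A ∩ ⋂ a ∈ t, {b | r a b}) \ t ∈ l :=
    Filter.sdiff_mem (Filter.inter_mem hA hlinked) (hl htfin.compl_mem_cofinite)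
  obtain ⟨x, ⟨hxA, hxr⟩, hxt⟩ := Filter.nonempty_of_mem hnew
  replace hxr : ∀ a ∈ t, r a x := mem_iInter₂.1 hxr
  have hins : insert x t ⊆ A ∧ (insert x t).Pairwise r :=
    ⟨insert_subset hxA htA, htr.insert fun a ha _ => ⟨hr _ _ (hxr a ha), hxr a ha⟩⟩
  exact hxt (hmax hins (subset_insert x t) (mem_insert x t))

theorem exists_infinite_pairwise_or_pairwise_not [Infinite S] (hr : ∀ a b, r a b → r b a) :
    ∃ t : Set S, t.Infinite ∧ (t.Pairwise r ∨ t.Pairwise (¬ r · ·)) := by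
  set l := Filter.hyperfilter S
  have hl : (l : Filter S) ≤ Filter.cofinite := Filter.hyperfilter_le_cofinite
  rcases l.mem_or_compl_mem {a | {b | r a b} ∈ l} with hA | hA
  · obtain ⟨t, -, ht, htr⟩ := exists_infinite_pairwise_of_le_cofinite hl hr hA fun _ => id
    exact ⟨t, ht, .inl htr⟩
  · obtain ⟨t, -, ht, htr⟩ := exists_infinite_pairwise_of_le_cofinite hl
      (fun a b h h' => h (hr b a h')) hA fun _ ha => Ultrafilter.compl_mem_iff_notMem.2 ha
    exact ⟨t, ht, .inr htr⟩

end Ramsey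

theorem partitionRelTwo_aleph0 : PartitionRelTwo (ℵ₀ : Cardinal.{u}) := by
  intro S f hS hf
  have : Infinite S := Cardinal.infinite_iff.2 hS.ge
  obtain ⟨t, ht, htf⟩ := exists_infinite_pairwise_or_pairwise_not (r := fun a b => f a b = true)
    fun a b h => (hf b a).trans h
  have htS : #t = ℵ₀ := le_antisymm (hS ▸ mk_set_le t) (Cardinal.infinite_iff.1 ht.to_subtype)
  rcases htf with htf | htf
  · exact ⟨t, htS, true, fun a ha b hb hab => htf ha hb hab⟩
  · exact ⟨t, htS, false, fun a ha b hb hab => Bool.not_eq_true _ ▸ htf ha hb hab⟩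

theorem PartitionRelTwo.exists_subset_pairwise_or_pairwise_not {κ : Cardinal.{u}}
    (hκ : PartitionRelTwo κ) {α : Type u} {s : Set α} (hs : #s = κ) {r : α → α → Prop}
    (hr : ∀ a b, r a b → r b a) :
    ∃ t ⊆ s, #t = κ ∧ (t.Pairwise r ∨ t.Pairwise (¬ r · ·)) := by
  classical
  obtain ⟨Y, hY, c, hYc⟩ := hκ s (fun a b => decide (r a b)) hs
    fun a b => decide_eq_decide.2 ⟨hr a b, hr b a⟩
  refine ⟨(↑) '' Y, Subtype.coe_image_subset s Y, by rwa [mk_image_eq Subtype.coe_injective], ?_⟩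
  have hYc' : ((↑) '' Y : Set α).Pairwise fun a b => decide (r a b) = c := by
    rintro _ ⟨a, ha, rfl⟩ _ ⟨b, hb, rfl⟩ hab
    exact hYc a ha b hb (ne_of_apply_ne _ hab)
  cases c
  · exact .inr (hYc'.mono' fun a b => of_decide_eq_false)
  · exact .inl (hYc'.mono' fun a b => of_decide_eq_true)

section Cellular

variable {X : Type u} [TopologicalSpace X] {𝒰 𝒱 : Set (Set X)}

theorem IsCellularFamily.subset (h𝒰 : IsCellularFamily X 𝒰) (h : 𝒱 ⊆ 𝒰) :
    IsCellularFamily X 𝒱 :=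
  ⟨fun U hU => h𝒰.1 U (h hU), fun U hU => h𝒰.2.1 U (h hU), h𝒰.2.2.mono h⟩

theorem IsCellularFamily.subsingleton_of_pairwise_inter_nonempty (h𝒰 : IsCellularFamily X 𝒰)
    (hlink : ∀ U ∈ 𝒰, ∀ V ∈ 𝒰, (U ∩ V).Nonempty) : 𝒰.Subsingleton := fun U hU V hV => by
  by_contra hUV
  exact (hlink U hU V hV).ne_empty (h𝒰.2.2 hU hV hUV).inter_eq

theorem IsWeakPrecaliberStar.mk_lt_of_isCellularFamily {κ : Cardinal.{u}}
    (hX : IsWeakPrecaliberStar X κ) (hκ : 1 < κ) (h𝒰 : IsCellularFamily X 𝒰) : #𝒰 < κ := by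
  by_contra! hle
  obtain ⟨𝒰', h𝒰', h𝒰'κ⟩ := le_mk_iff_exists_subset.1 hle
  obtain ⟨𝒱, h𝒱, h𝒱κ, hlink⟩ := hX 𝒰' h𝒰'κ (fun U hU => h𝒰.1 U (h𝒰' hU))
    fun U hU => h𝒰.2.1 U (h𝒰' hU)
  have h𝒱1 : #𝒱 ≤ 1 := mk_le_one_iff_set_subsingleton.2
    ((h𝒰.subset (h𝒱.trans h𝒰')).subsingleton_of_pairwise_inter_nonempty hlink)
  exact (h𝒱κ ▸ h𝒱1).not_gt hκ

theorem isWeakPrecaliberStar_of_partitionRelTwo {κ : Cardinal.{u}} (hκ : PartitionRelTwo κ)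
    (hcell : ∀ 𝒰 : Set (Set X), IsCellularFamily X 𝒰 → #𝒰 < κ) : IsWeakPrecaliberStar X κ := by
  intro 𝒰 h𝒰κ hopen hne
  obtain ⟨𝒱, h𝒱, h𝒱κ, hlink | hdisj⟩ := hκ.exists_subset_pairwise_or_pairwise_not h𝒰κ
    (r := fun U V : Set X => (U ∩ V).Nonempty) fun U V => by rw [inter_comm]; exact id
  · refine ⟨𝒱, h𝒱, h𝒱κ, fun U hU V hV => ?_⟩
    rcases eq_or_ne U V with rfl | hUV
    · simpa using hne U (h𝒱 hU)
    · exact hlink hU hV hUV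
  · have : IsCellularFamily X 𝒱 := ⟨fun U hU => hopen U (h𝒱 hU), fun U hU => hne U (h𝒱 hU),
      hdisj.mono' fun U V h => disjoint_iff_inter_eq_empty.2 (not_nonempty_iff_eq_empty.1 h)⟩
    exact (h𝒱κ ▸ hcell 𝒱 this).false.elim

end Cellular

theorem stmt4 (X : Type u) [TopologicalSpace X] (κ : Cardinal.{u})
    (hκ : κ = ℵ₀ ∨ (ℵ₀ < κ ∧ PartitionRelTwo κ)) :
    IsWeakPrecaliberStar X κ ↔ ∀ 𝒰 : Set (Set X), IsCellularFamily X 𝒰 → #𝒰 < κ := by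
  have hpart : PartitionRelTwo κ := hκ.elim (· ▸ partitionRelTwo_aleph0) And.right
  have hone : 1 < κ := one_lt_aleph0.trans_le (hκ.elim (·.ge) (·.1.le))
  exact ⟨fun hX _ => hX.mk_lt_of_isCellularFamily hone,
    isWeakPrecaliberStar_of_partitionRelTwo hpart⟩
end

section
/- Let κ be a singular cardinal (an infinite cardinal with cf(κ) < κ) and X a topological space such that cf(κ) is not a caliber* for X. Then there exists a topological space Y and a dense topological embedding of X into Y (i.e., Y is an extension of X) such that κ is not a caliber* for Y. -/
/-!
Let `𝒰` be a family of `cf κ` non-empty open sets of `X` no `cf κ` of which meet. Index a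
cofinal subset of `κ` of size `cf κ` by `𝒰` and send each `d < κ` to the member of `𝒰` indexed by
a cofinal point above `d`: this gives `col : κ → 𝒰` whose fibres have size `< κ`. Adjoin `κ` new
points `d` to `X`, a neighbourhood of `d` being required to contain `col d`; then `X` is dense,
and the `κ` open sets `{d} ∪ col d` witness that `κ` is not a caliber*. Indeed a new point lies
in only one of them, and if `x ∈ X` lies in `κ` of them then, since fewer than `cf κ` fibres of
size `< κ` cannot cover `κ` points, `x` lies in `cf κ` distinct members of `𝒰`.
-/

open Cardinal Set

universe u

theorem Cardinal.mk_Iic_toType_ord_lt {κ : Cardinal.{u}} (hκ : ℵ₀ ≤ κ) (i : κ.ord.ToType) :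
    #(Iic i) < κ := by
  rw [← Iio_insert]
  exact mk_insert_le.trans_lt <| add_lt_of_lt hκ (by simpa using mk_Iio_lt i)
    (one_lt_aleph0.trans_le hκ)

theorem Cardinal.exists_fiber_lt_of_mk_eq_cof {κ : Cardinal.{u}} (hκ : ℵ₀ ≤ κ) {ι : Type u}
    (hι : #ι = κ.ord.cof) : ∃ f : κ.ord.ToType → ι, ∀ i, #(f ⁻¹' {i}) < κ := by
  obtain ⟨S, hS, hScard⟩ := Order.exists_cof_eq κ.ord.ToType
  rw [Ordinal.cof_toType, ← hι] at hScard
  obtain ⟨e⟩ := Cardinal.eq.mp hScard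
  choose c hcS hc using hS
  refine ⟨fun d => e ⟨c d, hcS d⟩, fun i => ?_⟩
  refine lt_of_le_of_lt (mk_le_mk_of_subset fun d hd => ?_) (mk_Iic_toType_ord_lt hκ (e.symm i))
  rw [mem_preimage, mem_singleton_iff] at hd
  simpa [← hd] using hc d

theorem Cardinal.cof_le_mk_image_of_fiber_lt {α β : Type u} {κ : Cardinal.{u}} (hκ : ℵ₀ ≤ κ)
    {f : α → β} (hf : ∀ a, #(f ⁻¹' {f a}) < κ) {T : Set α} (hT : #T = κ) :
    κ.ord.cof ≤ #(f '' T) := by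
  by_contra! hlt
  subst hT
  obtain ⟨b, hb⟩ := infinite_pigeonhole (imageFactorization f T) hκ hlt
  obtain ⟨a, -, ha⟩ := b.2
  have hfiber : #(imageFactorization f T ⁻¹' {b}) ≤ #(f ⁻¹' {f a}) := by
    refine mk_le_of_injective (f := fun t => ⟨t.1.1, ?_⟩) fun s t h => ?_
    · exact (congrArg Subtype.val (mem_singleton_iff.mp t.2)).trans ha.symm
    · simpa [Subtype.ext_iff] using h
  exact (hf a).not_ge (hb ▸ hfiber)

/-- `X ⊕ D`, where a new point `d` lies only in open sets that contain the set `col d`. -/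
def AdjoinPoints {X D : Type*} (_col : D → Set X) : Type _ := X ⊕ D

namespace AdjoinPoints

section

variable {X D : Type*} {col : D → Set X}

def inl (x : X) : AdjoinPoints col := Sum.inl x

def inr (d : D) : AdjoinPoints col := Sum.inr d

theorem inl_injective : Function.Injective (inl : X → AdjoinPoints col) := Sum.inl_injective

theorem inr_injective : Function.Injective (inr : D → AdjoinPoints col) := Sum.inr_injective

@[simp] theorem inl_ne_inr (x : X) (d : D) : (inl x : AdjoinPoints col) ≠ inr d := Sum.inl_ne_inr

@[simp] theorem inr_ne_inl (x : X) (d : D) : (inr d : AdjoinPoints col) ≠ inl x := Sum.inr_ne_inl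

def basicNhd (col : D → Set X) (d : D) : Set (AdjoinPoints col) := insert (inr d) (inl '' col d)

@[simp] theorem inl_mem_basicNhd {x : X} {d : D} : inl x ∈ basicNhd col d ↔ x ∈ col d := by
  simp [basicNhd, inl_injective.eq_iff]

@[simp] theorem inr_mem_basicNhd {d' d : D} : inr d' ∈ basicNhd col d ↔ d' = d := by
  simp [basicNhd, inr_injective.eq_iff]

theorem basicNhd_injective : Function.Injective (basicNhd col) := fun _ _ h =>
  inr_mem_basicNhd.mp (h ▸ inr_mem_basicNhd.mpr rfl)

variable [TopologicalSpace X]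

instance : TopologicalSpace (AdjoinPoints col) where
  IsOpen O := IsOpen (inl ⁻¹' O) ∧ ∀ d, inr d ∈ O → col d ⊆ inl ⁻¹' O
  isOpen_univ := ⟨isOpen_univ, fun _ _ => subset_univ _⟩
  isOpen_inter _ _ h₁ h₂ :=
    ⟨h₁.1.inter h₂.1, fun d hd => subset_inter (h₁.2 d hd.1) (h₂.2 d hd.2)⟩
  isOpen_sUnion 𝒮 h𝒮 := by
    refine ⟨by rw [preimage_sUnion]; exact isOpen_biUnion fun O hO => (h𝒮 O hO).1, ?_⟩
    rintro d ⟨O, hO, hdO⟩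
    exact ((h𝒮 O hO).2 d hdO).trans (preimage_mono (subset_sUnion_of_mem hO))

theorem isEmbedding_inl : Topology.IsEmbedding (inl : X → AdjoinPoints col) := by
  refine ⟨⟨TopologicalSpace.ext_iff.mpr fun U => ⟨fun hU => ?_, ?_⟩⟩, inl_injective⟩
  · have hpre : (inl : X → AdjoinPoints col) ⁻¹' (inl '' U ∪ inr '' {d | col d ⊆ U}) = U := by
      ext x; simp [inl_injective.eq_iff]
    refine isOpen_induced_iff.mpr ⟨_, ⟨by rwa [hpre], ?_⟩, hpre⟩
    rintro d (⟨x, -, hx⟩ | ⟨d', hd', hd⟩)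
    · exact absurd hx (inl_ne_inr x d)
    · rw [hpre, ← inr_injective hd]
      exact hd'
  · rintro ⟨O, hO, rfl⟩
    exact hO.1

theorem denseRange_inl (hcol : ∀ d, (col d).Nonempty) :
    DenseRange (inl : X → AdjoinPoints col) := by
  refine dense_iff_inter_open.mpr fun O hO ⟨y, hy⟩ => ?_
  rcases y with x | d
  · exact ⟨inl x, hy, mem_range_self x⟩
  · obtain ⟨x, hx⟩ := hcol d
    exact ⟨inl x, hO.2 d hy hx, mem_range_self x⟩

theorem isDenseEmbedding_inl (hcol : ∀ d, (col d).Nonempty) :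
    IsDenseEmbedding (inl : X → AdjoinPoints col) :=
  { isEmbedding_inl with dense := denseRange_inl hcol }

theorem isOpen_basicNhd {d : D} (hd : IsOpen (col d)) : IsOpen (basicNhd col d) := by
  have hpre : inl ⁻¹' basicNhd col d = col d := by ext x; simp
  refine ⟨by rwa [hpre], fun d' hd' => ?_⟩
  rw [inr_mem_basicNhd.mp hd', hpre]

end

theorem not_isCaliberStar {X D : Type u} [TopologicalSpace X] {col : D → Set X}
    {κ : Cardinal.{u}} (hκ : ℵ₀ ≤ κ) (hD : #D = κ) (hopen : ∀ d, IsOpen (col d))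
    (hfiber : ∀ d, #(col ⁻¹' {col d}) < κ)
    (hrange : ∀ 𝒜 ⊆ range col, #𝒜 = κ.ord.cof → ⋂₀ 𝒜 = ∅) :
    ¬ IsCaliberStar (AdjoinPoints col) κ := by
  intro hcal
  obtain ⟨𝒲, h𝒲, h𝒲card, y, hy⟩ := hcal (range (basicNhd col))
    (by rw [mk_range_eq _ basicNhd_injective, hD])
    (forall_mem_range.2 fun d => isOpen_basicNhd (hopen d))
    (forall_mem_range.2 fun d => ⟨inr d, inr_mem_basicNhd.mpr rfl⟩)
  set T : Set D := basicNhd col ⁻¹' 𝒲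
  have hT : #T = κ := by
    rw [← h𝒲card, ← image_preimage_eq_of_subset h𝒲, mk_image_eq basicNhd_injective]
  have hyT : ∀ d ∈ T, y ∈ basicNhd col d := fun d hd => hy _ hd
  rcases y with x | d₀
  · obtain ⟨𝒜, h𝒜, h𝒜card⟩ :=
      le_mk_iff_exists_subset.mp (cof_le_mk_image_of_fiber_lt hκ hfiber hT)
    have hx : x ∈ ⋂₀ 𝒜 := by
      rintro _ hA
      obtain ⟨d, hd, rfl⟩ := h𝒜 hA
      exact inl_mem_basicNhd.mp (hyT d hd)
    rwa [hrange 𝒜 (h𝒜.trans (image_subset_range _ _)) h𝒜card] at hx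
  · have hT₁ : #T ≤ 1 := mk_le_one_iff_set_subsingleton.mpr fun d hd d' hd' =>
      (inr_mem_basicNhd.mp (hyT d hd)).symm.trans (inr_mem_basicNhd.mp (hyT d' hd'))
    exact (one_lt_aleph0.trans_le hκ).not_ge (hT ▸ hT₁)

end AdjoinPoints

theorem stmt7_general (κ : Cardinal.{u}) (hκ : ℵ₀ ≤ κ)
    (X : Type u) [TopologicalSpace X] (h : ¬ IsCaliberStar X κ.ord.cof) :
    ∃ (Y : Type u) (_ : TopologicalSpace Y) (e : X → Y),
      IsDenseEmbedding e ∧ ¬ IsCaliberStar Y κ := by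
  unfold IsCaliberStar at h
  push Not at h
  obtain ⟨𝒰, h𝒰card, h𝒰open, h𝒰ne, h𝒰⟩ := h
  obtain ⟨f, hf⟩ := exists_fiber_lt_of_mk_eq_cof hκ h𝒰card
  let col (d : κ.ord.ToType) : Set X := f d
  have hcol_fiber (d) : col ⁻¹' {col d} = f ⁻¹' {f d} := by ext; simp [col, Subtype.ext_iff]
  refine ⟨AdjoinPoints col, inferInstance, AdjoinPoints.inl,
    AdjoinPoints.isDenseEmbedding_inl fun d => h𝒰ne _ (f d).2,
    AdjoinPoints.not_isCaliberStar hκ (mk_ord_toType κ) (fun d => h𝒰open _ (f d).2)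
      (fun d => hcol_fiber d ▸ hf (f d)) fun 𝒜 h𝒜 => h𝒰 𝒜 (h𝒜.trans ?_)⟩
  exact range_subset_iff.2 fun d => (f d).2

theorem stmt7 (κ : Cardinal.{u}) (hκ : ℵ₀ ≤ κ) (hsing : κ.ord.cof < κ)
    (X : Type u) [TopologicalSpace X] (h : ¬ IsCaliberStar X κ.ord.cof) :
    ∃ (Y : Type u) (_ : TopologicalSpace Y) (e : X → Y),
      IsDenseEmbedding e ∧ ¬ IsCaliberStar Y κ :=
  stmt7_general κ hκ X h
end

section
/- If κ is an infinite cardinal with κ < 𝔠 and cf(κ) = ω, then there exists an almost disjoint family 𝒜 on ω with |𝒜| = κ such that for every ℬ ⊆ 𝒜 with |ℬ| = κ there exist A, B, C ∈ ℬ with A ∩ B ∩ C = ∅. -/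
open Cardinal Set

universe u

/-!
Since `cf κ = ω`, an index set of size `κ` splits into countably many levels, each of size `< κ`;
since `κ ≤ 𝔠`, it injects into the branches `ℕ → Bool` of the binary tree. The set attached to an
index is its branch, coded inside a copy of the tree reserved for its level: distinct branches
share only finitely many nodes, and sets on different levels are disjoint. A subfamily of size `κ`
cannot lie within one level, so it has two disjoint members `A, B`, and `A ∩ B ∩ A = ∅`.
-/

section Branches

open Encodable

variable {α β : Type*} [Encodable α] [Encodable β]

def branchCode (b : β) (x : ℕ → α) (k : ℕ) : ℕ := encode (b, (List.range k).map x)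

theorem branchCode_eq_branchCode {b b' : β} {x y : ℕ → α} {k l : ℕ}
    (h : branchCode b x k = branchCode b' y l) : b = b' ∧ k = l ∧ ∀ i < k, x i = y i := by
  obtain ⟨rfl, hxy⟩ := Prod.ext_iff.mp (encode_injective h)
  obtain rfl : k = l := by simpa using congrArg List.length hxy
  simpa using List.map_inj_left.mp hxy

def levelBranch (b : β) (x : ℕ → α) : Set ℕ := range (branchCode b x)

theorem levelBranch_infinite (b : β) (x : ℕ → α) : (levelBranch b x).Infinite :=
  infinite_range_of_injective fun _ _ h => (branchCode_eq_branchCode h).2.1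

theorem disjoint_levelBranch {b b' : β} (h : b ≠ b') (x y : ℕ → α) :
    Disjoint (levelBranch b x) (levelBranch b' y) := by
  rw [Set.disjoint_left]
  rintro _ ⟨k, rfl⟩ ⟨l, hl⟩
  exact h (branchCode_eq_branchCode hl).1.symm

theorem finite_levelBranch_inter_levelBranch {x y : ℕ → α} (h : x ≠ y) (b b' : β) :
    (levelBranch b x ∩ levelBranch b' y).Finite := by
  obtain ⟨k, hk⟩ := Function.ne_iff.mp h
  refine ((finite_Iic k).image (branchCode b x)).subset ?_
  rintro _ ⟨⟨l, rfl⟩, ⟨m, hm⟩⟩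
  obtain ⟨-, -, hagree⟩ := branchCode_eq_branchCode hm.symm
  exact ⟨l, not_lt.mp fun hkl => hk (hagree k hkl), rfl⟩

theorem levelBranch_inj {b b' : β} {x y : ℕ → α} :
    levelBranch b x = levelBranch b' y ↔ b = b' ∧ x = y := by
  refine ⟨fun h => ?_, fun ⟨hb, hxy⟩ => hb ▸ hxy ▸ rfl⟩
  have hb : b = b' := by
    by_contra hb
    exact (levelBranch_infinite b x).nonempty.ne_empty
      ((disjoint_levelBranch hb x y).eq_bot_of_le h.le)
  refine ⟨hb, ?_⟩
  by_contra hxy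
  have hfin := finite_levelBranch_inter_levelBranch hxy b b'
  rw [h, inter_self] at hfin
  exact levelBranch_infinite b' y hfin

end Branches

theorem Order.exists_nat_fibers_lt {α : Type*} [Preorder α] [Nonempty α]
    (hcof : Order.cof α ≤ ℵ₀) (hIic : ∀ a : α, #(Iic a) < #α) :
    ∃ p : α → ℕ, ∀ n, #(p ⁻¹' {n}) < #α := by
  obtain ⟨s, hs, hscard⟩ := Order.exists_cof_eq α
  obtain ⟨g, rfl⟩ :=
    (le_aleph0_iff_set_countable.mp (hscard.trans_le hcof)).exists_eq_range hs.nonempty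
  have hg : ∀ a, ∃ n, a ≤ g n := fun a => by
    obtain ⟨_, ⟨n, rfl⟩, han⟩ := hs a
    exact ⟨n, han⟩
  choose p hp using hg
  refine ⟨p, fun n => (mk_le_mk_of_subset ?_).trans_lt (hIic (g n))⟩
  rintro a rfl
  exact hp a

theorem Cardinal.exists_ne_of_fibers_lt {ι γ : Type*} [Nonempty γ] {κ : Cardinal} {p : ι → γ}
    (hp : ∀ c, #(p ⁻¹' {c}) < κ) {J : Set ι} (hJ : #J = κ) : ∃ i ∈ J, ∃ j ∈ J, p i ≠ p j := by
  by_contra! hconst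
  obtain ⟨i, hi⟩ : J.Nonempty := by
    rw [← Set.nonempty_coe_sort, ← mk_ne_zero_iff, hJ]
    exact (hp (Classical.arbitrary γ)).ne_bot
  have hJsub : J ⊆ p ⁻¹' {p i} := fun j hj => (hconst i hi j hj).symm
  exact ((mk_le_mk_of_subset hJsub).trans_lt (hp (p i))).ne hJ

theorem stmt8 (κ : Cardinal.{0}) (hκ : ℵ₀ ≤ κ) (hlt : κ < Cardinal.continuum)
    (hcof : κ.ord.cof = ℵ₀) :
    ∃ 𝒜 : Set (Set ℕ), #𝒜 = κ ∧ (∀ A ∈ 𝒜, A.Infinite) ∧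
      (𝒜.Pairwise fun A B => (A ∩ B).Finite) ∧
      ∀ ℬ ⊆ 𝒜, #ℬ = κ → ∃ A ∈ ℬ, ∃ B ∈ ℬ, ∃ C ∈ ℬ, A ∩ B ∩ C = ∅ := by
  have hι : #κ.ord.ToType = κ := mk_ord_toType κ
  have : Nonempty κ.ord.ToType :=
    mk_ne_zero_iff.mp (by rw [hι]; exact (aleph0_pos.trans_le hκ).ne')
  obtain ⟨p, hp⟩ := Order.exists_nat_fibers_lt (α := κ.ord.ToType)
    (by rw [Ordinal.cof_toType, hcof]) fun a => mk_Iic_lt a (by simp) (by rwa [hι])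
  obtain ⟨f⟩ : Nonempty (κ.ord.ToType ↪ (ℕ → Bool)) := by
    rw [← le_def, hι, mk_arrow, mk_bool, mk_nat, lift_ofNat, lift_aleph0, two_power_aleph0]
    exact hlt.le
  let A i := levelBranch (p i) (f i)
  have hA : Function.Injective A := fun i j h => f.injective (levelBranch_inj.mp h).2
  refine ⟨range A, by rw [mk_range_eq A hA, hι], ?_, ?_, ?_⟩
  · rintro _ ⟨i, rfl⟩
    exact levelBranch_infinite _ _
  · rintro _ ⟨i, rfl⟩ _ ⟨j, rfl⟩ hij
    exact finite_levelBranch_inter_levelBranch (f.injective.ne (ne_of_apply_ne A hij)) _ _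
  · intro ℬ hℬ hcard
    obtain ⟨i, hi, j, hj, hij⟩ := exists_ne_of_fibers_lt (hι ▸ hp) (J := A ⁻¹' ℬ)
      (by rw [mk_preimage_of_injective_of_subset_range A ℬ hA hℬ, hcard])
    exact ⟨A i, hi, A j, hj, A i, hi, by rw [(disjoint_levelBranch hij _ _).inter_eq, empty_inter]⟩
end

section
/- If κ is an infinite cardinal with κ < 𝔠 and cf(κ) = ω, then κ is not a precaliber* for βω, the Stone–Čech compactification of the discrete space of natural numbers. -/
open Cardinal Set

universe u

section Aux

open Classical in
/-- The basic clopen set of `βℕ` corresponding to `B ⊆ ℕ`. -/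
noncomputable def VB (B : Set ℕ) : Set (StoneCech ℕ) :=
  stoneCechExtend (g := fun n => decide (n ∈ B)) continuous_of_discreteTopology ⁻¹' {true}

lemma isOpen_VB (B : Set ℕ) : IsOpen (VB B) :=
  (isOpen_discrete _).preimage (continuous_stoneCechExtend _)

lemma unit_mem_VB {B : Set ℕ} {n : ℕ} : stoneCechUnit n ∈ VB B ↔ n ∈ B := by
  classical
  have h := congrFun (stoneCechExtend_extends
    (g := fun n => decide (n ∈ B)) continuous_of_discreteTopology) n
  simp only [Function.comp_apply] at h
  simp only [VB, Set.mem_preimage, Set.mem_singleton_iff, h, decide_eq_true_iff]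

lemma VB_nonempty {B : Set ℕ} (hB : B.Nonempty) : (VB B).Nonempty := by
  obtain ⟨n, hn⟩ := hB
  exact ⟨stoneCechUnit n, unit_mem_VB.mpr hn⟩

lemma VB_injective : Function.Injective VB := by
  intro B C h
  ext n
  rw [← @unit_mem_VB B n, ← @unit_mem_VB C n, h]

lemma VB_disjoint {B C : Set ℕ} (h : B ∩ C = ∅) : VB B ∩ VB C = ∅ := by
  by_contra hne
  obtain ⟨n, hn⟩ := denseRange_stoneCechUnit.exists_mem_open
    ((isOpen_VB B).inter (isOpen_VB C)) (Set.nonempty_iff_ne_empty.2 hne)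
  have : n ∈ B ∩ C := ⟨unit_mem_VB.mp hn.1, unit_mem_VB.mp hn.2⟩
  rw [h] at this
  exact this

/-- From countable cofinality, get a sequence of cardinals below `κ` with supremum `κ`. -/
lemma exists_seq_of_cof (κ : Cardinal.{0}) (hκ : ℵ₀ ≤ κ) (hcof : κ.ord.cof = ℵ₀) :
    ∃ c : ℕ → Cardinal.{0}, (∀ n, c n < κ) ∧ κ ≤ ⨆ n, c n := by
  obtain ⟨ι, f, hlsub, hι⟩ := Ordinal.exists_lsub_cof κ.ord
  rw [hcof] at hι
  obtain ⟨e⟩ := Cardinal.eq.mp (hι.trans Cardinal.mk_nat.symm)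
  set g : ℕ → Ordinal := fun n => f (e.symm n) with hg
  have hglt : ∀ n, g n < κ.ord := fun n => hlsub ▸ Ordinal.lt_lsub f (e.symm n)
  refine ⟨fun n => (g n).card, fun n => Cardinal.lt_ord.mp (hglt n), ?_⟩
  by_contra hsup
  push_neg at hsup
  set μ := ⨆ n, (g n).card with hμ
  have hflt : ∀ i, f i < (Order.succ μ).ord := by
    intro i
    rw [Cardinal.lt_ord, Order.lt_succ_iff]
    have : f i = g (e i) := by simp [hg]
    rw [this]
    exact le_ciSup (Cardinal.bddAbove_range _) (e i)
  have hκle : κ ≤ Order.succ μ := by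
    rw [← Cardinal.ord_le_ord, ← hlsub]
    exact Ordinal.lsub_le hflt
  have hκeq : κ = Order.succ μ := le_antisymm hκle (Order.succ_le_of_lt hsup)
  rcases lt_or_ge μ ℵ₀ with hμlt | hμge
  · obtain ⟨n, hn⟩ := Cardinal.lt_aleph0.mp hμlt
    rw [hn, ← Cardinal.nat_succ] at hκeq
    exact absurd (hκeq ▸ hκ) (not_le.mpr (Cardinal.nat_lt_aleph0 _))
  · have hreg := Cardinal.isRegular_succ hμge
    rw [← hκeq] at hreg
    have := hreg.cof_eq
    rw [hcof] at this
    exact absurd (this ▸ hsup) (not_lt.mpr hμge)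

lemma pair_mem_insert_image {n : ℕ} {S : Set ℕ} {m : ℕ} :
    Nat.pair n (m + 1) ∈ insert (Nat.pair n 0) ((fun k => Nat.pair n (k + 1)) '' S) ↔ m ∈ S := by
  constructor
  · rintro (h | ⟨k, hk, h⟩)
    · exact absurd (Nat.pair_eq_pair.mp h).2 (Nat.succ_ne_zero m)
    · rwa [← Nat.succ_injective (Nat.pair_eq_pair.mp h).2]
  · intro h
    exact Set.mem_insert_iff.mpr (Or.inr ⟨m, h, rfl⟩)

end Aux

theorem stmt9 (κ : Cardinal.{0}) (hκ : ℵ₀ ≤ κ) (hlt : κ < Cardinal.continuum)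
    (hcof : κ.ord.cof = ℵ₀) :
    ¬ IsPrecaliberStar (StoneCech ℕ) κ := by
  classical
  obtain ⟨c, hclt, hcsup⟩ := exists_seq_of_cof κ hκ hcof
  set A : ℕ → Set ℕ := fun n => {k | (Nat.unpair k).1 = n} with hA
  set S : ℕ → Set (Set ℕ) := fun n => {B | B.Nonempty ∧ B ⊆ A n} with hS
  have hcont_le : ∀ n, Cardinal.continuum ≤ #(S n) := by
    intro n
    have hφ : Function.Injective (fun T : Set ℕ =>
        (⟨insert (Nat.pair n 0) ((fun k => Nat.pair n (k + 1)) '' T),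
          ⟨Nat.pair n 0, Set.mem_insert _ _⟩, by
            rintro x (rfl | ⟨k, _, rfl⟩) <;> simp [hA, Nat.unpair_pair]⟩ : S n)) := by
      intro T T' h
      simp only [Subtype.mk.injEq] at h
      ext m
      rw [← pair_mem_insert_image (n := n) (S := T), h]
      exact pair_mem_insert_image
    calc Cardinal.continuum = #(Set ℕ) := by
          rw [Cardinal.mk_set, Cardinal.mk_nat, Cardinal.two_power_aleph0]
      _ ≤ #(S n) := Cardinal.mk_le_of_injective hφ
  have hT : ∀ n, ∃ T, T ⊆ S n ∧ #T = c n := fun n =>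
    Cardinal.le_mk_iff_exists_subset.mp (((hclt n).trans hlt).le.trans (hcont_le n))
  choose T hTsub hTcard using hT
  set W : Set (Set ℕ) := ⋃ n, T n with hW
  have hWne : ∀ B ∈ W, B.Nonempty := by
    intro B hB
    obtain ⟨n, hn⟩ := Set.mem_iUnion.mp hB
    exact (hTsub n hn).1
  have hdisj : ∀ {B C : Set ℕ} {n m : ℕ}, B ∈ T n → C ∈ T m → n ≠ m → B ∩ C = ∅ := by
    intro B C n m hBn hCm hnm
    ext k
    simp only [Set.mem_inter_iff, Set.mem_empty_iff_false, iff_false, not_and]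
    intro hkB hkC
    have h1 := (hTsub n hBn).2 hkB
    have h2 := (hTsub m hCm).2 hkC
    exact hnm (h1.symm.trans h2)
  have hWcard : #W = κ := by
    apply le_antisymm
    · refine (Cardinal.mk_iUnion_le T).trans ?_
      rw [Cardinal.mk_nat]
      calc ℵ₀ * ⨆ n, #(T n) ≤ ℵ₀ * κ :=
            mul_le_mul_right (ciSup_le fun n => (hTcard n) ▸ (hclt n).le) _
        _ = κ := Cardinal.aleph0_mul_eq hκ
    · refine hcsup.trans (ciSup_le fun n => ?_)
      exact (hTcard n) ▸ Cardinal.mk_le_mk_of_subset (Set.subset_iUnion T n)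
  intro hpc
  obtain ⟨𝒱, h𝒱sub, h𝒱card, hcen⟩ := hpc (VB '' W)
    (by rw [Cardinal.mk_image_eq VB_injective, hWcard])
    (by rintro U ⟨B, _, rfl⟩; exact isOpen_VB B)
    (by rintro U ⟨B, hB, rfl⟩; exact VB_nonempty (hWne B hB))
  set 𝒱' : Set (Set ℕ) := VB ⁻¹' 𝒱 ∩ W with h𝒱'
  have himg : VB '' 𝒱' = 𝒱 := by
    apply Set.Subset.antisymm
    · rintro U ⟨B, hB, rfl⟩
      exact hB.1
    · intro U hU
      obtain ⟨B, hBW, rfl⟩ := h𝒱sub hU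
      exact ⟨B, ⟨hU, hBW⟩, rfl⟩
  have h𝒱'card : #𝒱' = κ := by
    rw [← Cardinal.mk_image_eq (s := 𝒱') VB_injective, himg, h𝒱card]
  have h𝒱'ne : 𝒱'.Nonempty := by
    rw [Set.nonempty_iff_ne_empty]
    intro h
    rw [h, Cardinal.mk_emptyCollection] at h𝒱'card
    exact (Cardinal.aleph0_pos.trans_le hκ).ne h𝒱'card
  obtain ⟨B, hB⟩ := h𝒱'ne
  obtain ⟨n, hBn⟩ := Set.mem_iUnion.mp hB.2
  have hCex : ∃ C ∈ 𝒱', B ∩ C = ∅ := by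
    by_contra hno
    push_neg at hno
    have hsub : 𝒱' ⊆ T n := by
      intro C hC
      obtain ⟨m, hCm⟩ := Set.mem_iUnion.mp hC.2
      rcases eq_or_ne m n with rfl | hmn
      · exact hCm
      · exact absurd (hdisj hBn hCm hmn.symm) (Set.nonempty_iff_ne_empty.mp (hno C hC))
    have : #𝒱' ≤ c n := (hTcard n) ▸ Cardinal.mk_le_mk_of_subset hsub
    rw [h𝒱'card] at this
    exact absurd this (not_le.mpr (hclt n))
  obtain ⟨C, hC, hBC⟩ := hCex
  have hcen2 := hcen {VB B, VB C} ?_ ?_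
  · have : ⋂₀ (↑({VB B, VB C} : Finset (Set (StoneCech ℕ))) : Set (Set (StoneCech ℕ)))
        = VB B ∩ VB C := by
      simp
    rw [this, VB_disjoint hBC] at hcen2
    exact Set.not_nonempty_empty hcen2
  · intro U hU
    simp only [Finset.coe_insert, Finset.coe_singleton, Set.mem_insert_iff,
      Set.mem_singleton_iff] at hU
    rcases hU with rfl | rfl
    · exact hB.1
    · exact hC.1
  · exact ⟨VB B, Finset.mem_insert_self _ _⟩
end

section
/- For every infinite cardinal κ: κ is a caliber for βω if and only if cf(κ) > ω; κ is a precaliber for βω if and only if cf(κ) > ω; and κ is a weak precaliber for βω if and only if cf(κ) > ω. (Here βω is the Stone–Čech compactification of the discrete space of natural numbers.) -/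
/-! If `cf κ > ω`, every `κ` open sets of `βω` contain points of the countable dense set `ω`, and
by pigeonhole `κ` of them share a point. If `cf κ = ω`, split `κ` into countably many pieces of
size `< κ` along a cofinal `ω`-sequence and assign to the `n`-th piece the isolated point `{n}`;
a linked subfamily then lies within a single piece, so it has fewer than `κ` members. -/

open Cardinal Set

universe u

open Topology in
theorem isOpen_singleton_of_isInducing_of_denseRange {α X : Type*} [TopologicalSpace α]
    [TopologicalSpace X] [T1Space X] {f : α → X} (hi : IsInducing f) (hd : DenseRange f) {a : α}
    (ha : IsOpen ({a} : Set α)) : IsOpen ({f a} : Set X) := by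
  obtain ⟨W, hW, hWa⟩ := hi.isOpen_iff.1 ha
  have hW_range : W ∩ range f = {f a} := by
    rw [← image_preimage_eq_inter_range, hWa, image_singleton]
  have hWsub : W ⊆ {f a} := by
    simpa only [hW_range, closure_singleton] using hd.open_subset_closure_inter hW
  have haW : f a ∈ W := hW_range.symm.subset.trans inter_subset_left rfl
  rwa [hWsub.antisymm (singleton_subset_iff.2 haW)] at hW

theorem StoneCech.isOpen_singleton_stoneCechUnit {α : Type*} [TopologicalSpace α]
    [DiscreteTopology α] (a : α) : IsOpen ({stoneCechUnit a} : Set (StoneCech α)) :=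
  isOpen_singleton_of_isInducing_of_denseRange isInducing_stoneCechUnit denseRange_stoneCechUnit
    (isOpen_discrete _)

theorem Cardinal.exists_fiber_lt_of_cof_le {κ : Cardinal.{u}} (hκ : ℵ₀ ≤ κ) {β : Type u}
    (hβ : κ.ord.cof ≤ #β) : ∃ g : κ.ord.ToType → β, ∀ b, #(g ⁻¹' {b}) < κ := by
  obtain ⟨S, hS, hSκ⟩ := Order.exists_cof_eq κ.ord.ToType
  rw [Ordinal.cof_toType] at hSκ
  obtain ⟨e⟩ : Nonempty (S ↪ β) := by rw [← Cardinal.le_def, hSκ]; exact hβ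
  choose σ hσ using fun x => hS x
  let g : κ.ord.ToType → β := fun x => e ⟨σ x, (hσ x).1⟩
  refine ⟨g, fun b => ?_⟩
  rcases eq_empty_or_nonempty (g ⁻¹' {b}) with hb | ⟨x₀, hx₀⟩
  · simpa [hb] using aleph0_pos.trans_le hκ
  have hfiber : g ⁻¹' {b} ⊆ Iic (σ x₀) := by
    intro x hx
    have : σ x = σ x₀ := congrArg Subtype.val (e.injective (hx.trans hx₀.symm))
    exact this ▸ (hσ x).2
  calc #_ ≤ #(Iic (σ x₀)) := mk_le_mk_of_subset hfiber
    _ ≤ #(Iio (σ x₀)) + 1 := by rw [← Iio_insert]; exact mk_insert_le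
    _ < κ := add_lt_of_lt hκ (by simpa using mk_Iio_lt (σ x₀)) (one_lt_aleph0.trans_le hκ)

section Calibers

variable {X : Type u} [TopologicalSpace X] {κ : Cardinal.{u}}

theorem IsCaliber.isPrecaliber (h : IsCaliber X κ) : IsPrecaliber X κ := by
  intro ι U hι hU hne
  obtain ⟨J, hJ, x, hx⟩ := h U hι hU hne
  refine ⟨J, hJ, fun s hs _ => ⟨x, ?_⟩⟩
  rw [mem_iInter₂] at hx ⊢
  exact fun i hi => hx i (hs hi)

theorem IsPrecaliber.isWeakPrecaliber (h : IsPrecaliber X κ) : IsWeakPrecaliber X κ := by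
  classical
  intro ι U hι hU hne
  obtain ⟨J, hJ, hcentered⟩ := h U hι hU hne
  refine ⟨J, hJ, fun i hi j hj => ?_⟩
  obtain ⟨x, hx⟩ := hcentered {i, j} (by simp [insert_subset_iff, hi, hj]) ⟨i, by simp⟩
  simp only [Finset.mem_insert, Finset.mem_singleton, mem_iInter₂] at hx
  exact ⟨x, hx i (Or.inl rfl), hx j (Or.inr rfl)⟩

theorem isCaliber_of_denseRange {α : Type u} {f : α → X} (hf : DenseRange f) (hκ : ℵ₀ ≤ κ)
    (hα : #α < κ.ord.cof) : IsCaliber X κ := by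
  intro ι U hι hU hne
  choose g hg using fun i => hf.exists_mem_open (hU i) (hne i)
  obtain ⟨a, ha⟩ := infinite_pigeonhole_card g κ hι.ge hκ hα
  refine ⟨g ⁻¹' {a}, le_antisymm (hι ▸ mk_set_le _) ha, f a, mem_iInter₂.2 fun i hi => ?_⟩
  exact (show g i = a from hi) ▸ hg i

theorem not_isWeakPrecaliber_of_pairwise_disjoint {β : Type u} {V : β → Set X}
    (hV : ∀ b, IsOpen (V b)) (hne : ∀ b, (V b).Nonempty)
    (hdisj : Pairwise (Function.onFun Disjoint V))
    (hκ : ℵ₀ ≤ κ) (hβ : κ.ord.cof ≤ #β) : ¬ IsWeakPrecaliber X κ := by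
  intro h
  obtain ⟨g, hg⟩ := exists_fiber_lt_of_cof_le hκ hβ
  obtain ⟨J, hJ, hlinked⟩ := h (V ∘ g) (mk_ord_toType κ) (fun _ => hV _) (fun _ => hne _)
  obtain ⟨j₀, hj₀⟩ : J.Nonempty := by
    rw [← nonempty_coe_sort, ← mk_ne_zero_iff, hJ]
    exact (aleph0_pos.trans_le hκ).ne'
  have hJ_fiber : J ⊆ g ⁻¹' {g j₀} := fun j hj =>
    hdisj.eq (not_disjoint_iff_nonempty_inter.2 (hlinked j hj j₀ hj₀))
  exact (hg _).not_ge (hJ ▸ mk_le_mk_of_subset hJ_fiber)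

end Calibers

theorem stmt10 (κ : Cardinal.{0}) (hκ : ℵ₀ ≤ κ) :
    (IsCaliber (StoneCech ℕ) κ ↔ ℵ₀ < κ.ord.cof) ∧
    (IsPrecaliber (StoneCech ℕ) κ ↔ ℵ₀ < κ.ord.cof) ∧
    (IsWeakPrecaliber (StoneCech ℕ) κ ↔ ℵ₀ < κ.ord.cof) := by
  have caliber : ℵ₀ < κ.ord.cof → IsCaliber (StoneCech ℕ) κ := fun h =>
    isCaliber_of_denseRange denseRange_stoneCechUnit hκ (by rwa [mk_nat])
  have cof_of_weak : IsWeakPrecaliber (StoneCech ℕ) κ → ℵ₀ < κ.ord.cof := fun hw =>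
    not_le.1 fun h => not_isWeakPrecaliber_of_pairwise_disjoint
      (V := fun n : ℕ => {stoneCechUnit n}) StoneCech.isOpen_singleton_stoneCechUnit
      (fun _ => singleton_nonempty _)
      (fun _ _ hmn => disjoint_singleton.2 (injective_stoneCechUnit_of_t35Space.ne hmn))
      hκ (by rwa [mk_nat]) hw
  exact ⟨⟨fun h => cof_of_weak (IsPrecaliber.isWeakPrecaliber (IsCaliber.isPrecaliber h)),
      caliber⟩,
    ⟨fun h => cof_of_weak (IsPrecaliber.isWeakPrecaliber h),
      fun h => IsCaliber.isPrecaliber (caliber h)⟩,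
    ⟨cof_of_weak, fun h => IsPrecaliber.isWeakPrecaliber (IsCaliber.isPrecaliber (caliber h))⟩⟩
end

section
/- Let X be the set of natural numbers equipped with the cofinite topology. Then: (1) every infinite cardinal is a precaliber, a precaliber*, a weak precaliber, and a weak precaliber* for X; (2) an infinite cardinal λ is a caliber* for X if and only if λ > ω; (3) an infinite cardinal λ is a caliber for X if and only if cf(λ) > ω. -/
open Cardinal Set

universe u

section Aux

noncomputable section

/-!
Non-empty open sets of the cofinite topology on the infinite set `ℕ` are cofinite, so finitely
many of them always meet (the space is irreducible): every family is centered. There are only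
countably many open sets, so every `λ > ω` is a caliber* vacuously, and `ℕ` is a countable dense
set, so pigeonholing the members of a `λ`-family over the points they contain gives a caliber
whenever `cf λ > ω`. Conversely, every point lies in only finitely many of the tails `[n, ∞)`:
the tails themselves refute caliber* at `ω`, and if `cf λ = ω`, pulling them back along a map
`f : λ → ℕ` all of whose sets `{i | f i ≤ m}` have size `< λ` refutes caliber at `λ`.
-/

section Irreducible

variable {X : Type u} [TopologicalSpace X]

theorem Set.Finite.sInter_nonempty_of_isOpen [IrreducibleSpace X] {𝒱 : Set (Set X)}
    (h𝒱 : 𝒱.Finite) (ho : ∀ U ∈ 𝒱, IsOpen U) (hne : ∀ U ∈ 𝒱, U.Nonempty) :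
    (⋂₀ 𝒱).Nonempty :=
  (h𝒱.dense_sInter ho fun U hU => (ho U hU).dense (hne U hU)).nonempty

theorem isPrecaliber_of_irreducibleSpace [IrreducibleSpace X] (κ : Cardinal.{u}) :
    IsPrecaliber X κ := by
  intro ι U hι ho hne
  refine ⟨univ, by rw [mk_univ, hι], fun s _ _ => ?_⟩
  rw [← Finset.set_biInter_coe, ← sInter_image]
  exact (s.finite_toSet.image U).sInter_nonempty_of_isOpen
    (forall_mem_image.2 fun i _ => ho i) (forall_mem_image.2 fun i _ => hne i)

theorem isPrecaliberStar_of_irreducibleSpace [IrreducibleSpace X] (κ : Cardinal.{u}) :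
    IsPrecaliberStar X κ := fun 𝒰 h𝒰 ho hne =>
  ⟨𝒰, subset_rfl, h𝒰, fun s hs _ => s.finite_toSet.sInter_nonempty_of_isOpen
    (fun U hU => ho U (hs hU)) (fun U hU => hne U (hs hU))⟩

theorem isWeakPrecaliber_of_preirreducibleSpace [PreirreducibleSpace X] (κ : Cardinal.{u}) :
    IsWeakPrecaliber X κ := fun U hι ho hne =>
  ⟨univ, by rw [mk_univ, hι], fun i _ j _ =>
    nonempty_preirreducible_inter (ho i) (ho j) (hne i) (hne j)⟩

theorem isWeakPrecaliberStar_of_preirreducibleSpace [PreirreducibleSpace X] (κ : Cardinal.{u}) :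
    IsWeakPrecaliberStar X κ := fun 𝒰 h𝒰 ho hne =>
  ⟨𝒰, subset_rfl, h𝒰, fun U hU V hV =>
    nonempty_preirreducible_inter (ho U hU) (ho V hV) (hne U hU) (hne V hV)⟩

end Irreducible

section Calibers

variable {X : Type u} [TopologicalSpace X]

theorem isCaliberStar_of_oCard_lt {κ : Cardinal.{u}} (h : oCard X < κ) : IsCaliberStar X κ :=
  fun _ h𝒰 ho _ => ((h𝒰 ▸ mk_le_mk_of_subset ho).not_gt h).elim

theorem isCaliber_of_aleph0_lt_cof [TopologicalSpace.SeparableSpace X] {κ : Cardinal.{u}}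
    (h : ℵ₀ < κ.ord.cof) : IsCaliber X κ := by
  intro ι U hι ho hne
  obtain ⟨D, hDc, hDd⟩ := TopologicalSpace.exists_countable_dense X
  choose d hdU hdD using fun i => hDd.inter_open_nonempty (U i) (ho i) (hne i)
  have hκ : ℵ₀ ≤ #ι := hι ▸ h.le.trans (Ordinal.cof_ord_le κ)
  obtain ⟨x, hx⟩ := infinite_pigeonhole (fun i => (⟨d i, hdD i⟩ : D)) hκ
    (hι ▸ (mk_le_aleph0_iff.2 hDc.to_subtype).trans_lt h)
  refine ⟨_, hx.trans hι, x, mem_iInter₂.2 fun i hi => ?_⟩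
  rw [mem_preimage, mem_singleton_iff] at hi
  exact hi ▸ hdU i

section PointFinite

variable {V : ℕ → Set X} (hVo : ∀ n, IsOpen (V n)) (hVne : ∀ n, (V n).Nonempty)
  (hV : ∀ x, {n | x ∈ V n}.Finite)
include hVo hVne hV

theorem not_isCaliberStar_aleph0_of_pointFinite (hVinj : Function.Injective V) :
    ¬ IsCaliberStar X ℵ₀ := by
  intro hcal
  have : Countable (range V) := (countable_range V).to_subtype
  have : Infinite (range V) := (infinite_range_of_injective hVinj).to_subtype
  obtain ⟨𝒱, h𝒱, h𝒱c, x, hx⟩ := hcal (range V) (mk_eq_aleph0 _)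
    (forall_mem_range.2 hVo) (forall_mem_range.2 hVne)
  refine (((hV x).image V).subset ?_).lt_aleph0.ne h𝒱c
  intro U hU
  obtain ⟨n, rfl⟩ := h𝒱 hU
  exact mem_image_of_mem V (hx _ hU)

theorem not_isCaliber_of_pointFinite {ι : Type u} {κ : Cardinal.{u}} (hι : #ι = κ)
    (f : ι → ℕ) (hf : ∀ m, #(f ⁻¹' Iic m) < κ) : ¬ IsCaliber X κ := by
  intro hcal
  obtain ⟨J, hJ, x, hx⟩ := hcal (V ∘ f) hι (fun i => hVo _) (fun i => hVne _)
  obtain ⟨m, hm⟩ := (hV x).bddAbove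
  have hJm : J ⊆ f ⁻¹' Iic m := fun i hi => hm (mem_iInter₂.1 hx i hi)
  exact (hJ ▸ mk_le_mk_of_subset hJm).not_gt (hf m)

end PointFinite

end Calibers

theorem Order.exists_nat_fibers_lt_of_cof_le_aleph0 {α : Type u} [LinearOrder α] [Nonempty α]
    {κ : Cardinal.{u}} (hIic : ∀ a : α, #(Iic a) < κ) (hcof : Order.cof α ≤ ℵ₀) :
    ∃ f : α → ℕ, ∀ m, #(f ⁻¹' Iic m) < κ := by
  classical
  obtain ⟨S, hS, hScard⟩ := Order.exists_cof_eq α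
  have hSc : S.Countable := countable_coe_iff.1 (mk_le_aleph0_iff.1 (hScard ▸ hcof))
  obtain ⟨g, rfl⟩ := hSc.exists_eq_range hS.nonempty
  have hg : ∀ a, ∃ n, a ≤ g n := fun a => by
    obtain ⟨_, ⟨n, rfl⟩, ha⟩ := hS a
    exact ⟨n, ha⟩
  refine ⟨fun a => Nat.find (hg a), fun m => ?_⟩
  set b := (Finset.range (m + 1)).sup' Finset.nonempty_range_add_one g
  refine (mk_le_mk_of_subset fun a (ha : Nat.find (hg a) ≤ m) => ?_).trans_lt (hIic b)
  exact (Nat.find_spec (hg a)).trans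
    (Finset.le_sup' g (Finset.mem_range.2 (Nat.lt_succ_of_le ha)))

namespace CofiniteTopology

instance {X : Type*} [Countable X] : Countable (CofiniteTopology X) :=
  CofiniteTopology.of.symm.injective.countable

theorem oCard_le_aleph0 {X : Type u} [Countable X] : oCard (CofiniteTopology X) ≤ ℵ₀ := by
  refine mk_le_aleph0_iff.2 (Countable.to_subtype ?_)
  refine ((Countable.ofPred_finite.preimage compl_injective).insert ∅).mono fun U hU => ?_
  rcases isOpen_iff'.1 hU with rfl | hU
  exacts [mem_insert _ _, mem_insert_of_mem _ hU]

def tail (n : ℕ) : Set (CofiniteTopology ℕ) := of.symm ⁻¹' Ici n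

theorem isOpen_tail (n : ℕ) : IsOpen (tail n) := by
  refine isOpen_iff.2 fun _ => ?_
  rw [tail, ← preimage_compl, compl_Ici]
  exact (finite_Iio n).preimage of.symm.injective.injOn

@[simp]
theorem of_mem_tail {m n : ℕ} : of n ∈ tail m ↔ m ≤ n := by
  simp [tail]

theorem tail_nonempty (n : ℕ) : (tail n).Nonempty := ⟨of n, of_mem_tail.2 le_rfl⟩

theorem finite_setOf_mem_tail (x : CofiniteTopology ℕ) : {n | x ∈ tail n}.Finite :=
  (finite_Iic (of.symm x)).subset fun _ hn => hn

theorem tail_injective : Function.Injective tail := fun _ _ h =>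
  le_antisymm (of_mem_tail.1 (h ▸ of_mem_tail.2 le_rfl))
    (of_mem_tail.1 (h ▸ of_mem_tail.2 le_rfl))

theorem not_isCaliberStar_aleph0 : ¬ IsCaliberStar (CofiniteTopology ℕ) ℵ₀ :=
  not_isCaliberStar_aleph0_of_pointFinite isOpen_tail tail_nonempty finite_setOf_mem_tail
    tail_injective

theorem not_isCaliber_of_cof_le_aleph0 {κ : Cardinal.{0}} (hκ : ℵ₀ ≤ κ)
    (hcof : κ.ord.cof ≤ ℵ₀) : ¬ IsCaliber (CofiniteTopology ℕ) κ := by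
  have : Nonempty κ.ord.ToType :=
    mk_ne_zero_iff.1 ((mk_ord_toType κ).trans_ne (aleph0_pos.trans_le hκ).ne')
  obtain ⟨f, hf⟩ := Order.exists_nat_fibers_lt_of_cof_le_aleph0
    (fun a => mk_ord_toType κ ▸ mk_Iic_lt a (by simp) (by simpa using hκ))
    ((Ordinal.cof_toType _).trans_le hcof)
  exact not_isCaliber_of_pointFinite isOpen_tail tail_nonempty finite_setOf_mem_tail
    (mk_ord_toType κ) f hf

end CofiniteTopology

theorem stmt11 :
    (∀ κ : Cardinal.{0}, ℵ₀ ≤ κ →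
      IsPrecaliber (CofiniteTopology ℕ) κ ∧ IsPrecaliberStar (CofiniteTopology ℕ) κ ∧
      IsWeakPrecaliber (CofiniteTopology ℕ) κ ∧ IsWeakPrecaliberStar (CofiniteTopology ℕ) κ) ∧
    (∀ lam : Cardinal.{0}, ℵ₀ ≤ lam → (IsCaliberStar (CofiniteTopology ℕ) lam ↔ ℵ₀ < lam)) ∧
    (∀ lam : Cardinal.{0}, ℵ₀ ≤ lam → (IsCaliber (CofiniteTopology ℕ) lam ↔ ℵ₀ < lam.ord.cof)) := by
  refine ⟨fun κ _ => ⟨isPrecaliber_of_irreducibleSpace κ, isPrecaliberStar_of_irreducibleSpace κ,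
      isWeakPrecaliber_of_preirreducibleSpace κ, isWeakPrecaliberStar_of_preirreducibleSpace κ⟩,
    fun lam hlam => ⟨fun hcal => ?_, fun h => ?_⟩, fun lam hlam => ⟨fun hcal => ?_, ?_⟩⟩
  · exact hlam.lt_of_ne fun h => CofiniteTopology.not_isCaliberStar_aleph0 (h ▸ hcal)
  · exact isCaliberStar_of_oCard_lt (CofiniteTopology.oCard_le_aleph0.trans_lt h)
  · exact not_le.1 fun hcof => CofiniteTopology.not_isCaliber_of_cof_le_aleph0 hlam hcof hcal
  · exact isCaliber_of_aleph0_lt_cof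
end
end Aux
end

section
/- Assume the Continuum Hypothesis (𝔠 = ℵ₁). Then for every countably infinite T₁ topological space X, an infinite cardinal λ is a caliber* for X if and only if λ > ω. -/
open Cardinal Set

universe u

theorem stmt14 (hCH : Cardinal.continuum.{u} = Cardinal.aleph 1)
    (X : Type u) [TopologicalSpace X] [T1Space X] (hX : #X = ℵ₀)
    (lam : Cardinal.{u}) (hlam : ℵ₀ ≤ lam) :
    IsCaliberStar X lam ↔ ℵ₀ < lam := by
  haveI : Infinite X := Cardinal.infinite_iff.mpr hX.ge
  constructor
  · intro hcal
    by_contra hle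
    push_neg at hle
    have hlam0 : lam = ℵ₀ := le_antisymm hle hlam
    obtain ⟨D⟩ : Nonempty (Denumerable X) := Cardinal.denumerable_iff.mpr hX
    set e : ℕ → X := fun n => Denumerable.ofNat X n with he
    have einj : Function.Injective e := (Denumerable.eqv X).symm.injective
    set f : ℕ → Set X := fun n => (e '' Set.Iic n)ᶜ with hf
    have hmem : ∀ n m, e m ∈ f n ↔ n < m := by
      intro n m
      simp only [hf, Set.mem_compl_iff, Set.mem_image, not_exists]
      constructor
      · intro h
        by_contra hnm
        push_neg at hnm
        exact h m ⟨hnm, rfl⟩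
      · rintro h k ⟨hk, hek⟩
        exact absurd (einj hek ▸ hk) (not_le.mpr (lt_of_lt_of_le h (einj hek ▸ le_refl m))) 
    have finj : Function.Injective f := by
      intro n m hnm
      by_contra hne
      rcases Nat.lt_or_ge n m with h | h
      · have : e m ∈ f n := (hmem n m).mpr h
        rw [hnm] at this
        exact absurd ((hmem m m).mp this) (lt_irrefl m)
      · have h' : n ≠ m := hne
        have : m < n := lt_of_le_of_ne h (Ne.symm h')
        have : e n ∈ f m := (hmem m n).mpr this
        rw [← hnm] at this
        exact absurd ((hmem n n).mp this) (lt_irrefl n)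
    set 𝒰 : Set (Set X) := Set.range f with h𝒰
    have h𝒰inf : 𝒰.Infinite := Set.infinite_range_of_injective finj
    have h𝒰card : #𝒰 = ℵ₀ := by
      apply le_antisymm
      · exact (Set.countable_range f).le_aleph0
      · haveI := h𝒰inf.to_subtype
        exact Cardinal.aleph0_le_mk _
    have hop : ∀ U ∈ 𝒰, IsOpen U := by
      rintro U ⟨n, rfl⟩
      exact (((Set.finite_Iic n).image e).isClosed).isOpen_compl
    have hnonempty : ∀ U ∈ 𝒰, U.Nonempty := by
      rintro U ⟨n, rfl⟩
      exact ((Set.finite_Iic n).image e).infinite_compl.nonempty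
    obtain ⟨𝒱, h𝒱sub, h𝒱card, x, hx⟩ := hcal 𝒰 (hlam0 ▸ h𝒰card) hop hnonempty
    have h𝒱inf : 𝒱.Infinite := by
      rw [← Set.infinite_coe_iff]
      exact Cardinal.infinite_iff.mpr (by rw [h𝒱card, hlam0])
    have hpre : (f ⁻¹' 𝒱).Infinite := h𝒱inf.preimage (h𝒱sub.trans (by rw [h𝒰]))
    set m := Denumerable.eqv X x with hm
    obtain ⟨n, hn𝒱, hmn⟩ := hpre.exists_gt m
    have hx' : x ∈ f n := hx (f n) hn𝒱
    have : e m = x := (Denumerable.eqv X).symm_apply_apply x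
    rw [← this] at hx'
    exact absurd ((hmem n m).mp hx') (not_lt.mpr (le_of_lt hmn))
  · intro hgt 𝒰 h𝒰 hopen hne
    -- λ = ℵ₁
    have hle1 : lam ≤ aleph 1 := by
      rw [← h𝒰, ← hCH]
      calc #𝒰 ≤ #(Set X) := Cardinal.mk_set_le 𝒰
        _ = 2 ^ #X := Cardinal.mk_set
        _ = 2 ^ ℵ₀ := by rw [hX]
        _ = 𝔠 := Cardinal.two_power_aleph0
    -- choose points
    have hch : ∀ U : Set X, ∃ x : X, U ∈ 𝒰 → x ∈ U := by
      intro U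
      by_cases h : U ∈ 𝒰
      · obtain ⟨x, hx⟩ := hne U h
        exact ⟨x, fun _ => hx⟩
      · exact ⟨Classical.arbitrary X, fun h' => absurd h' h⟩
    choose c hc using hch
    have hpig : ∃ p : X, ℵ₀ < #{U : 𝒰 | c ↑U = p} := by
      by_contra h
      push_neg at h
      have : #𝒰 ≤ #X * ℵ₀ :=
        Cardinal.mk_le_mk_mul_of_mk_preimage_le (fun U : 𝒰 => c ↑U) (fun p => by
          have : (fun U : 𝒰 => c ↑U) ⁻¹' {p} = {U : 𝒰 | c ↑U = p} := rfl
          rw [this]; exact h p)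
      rw [hX, Cardinal.aleph0_mul_aleph0, h𝒰] at this
      exact absurd this (not_le.mpr hgt)
    obtain ⟨p, hp⟩ := hpig
    refine ⟨{U ∈ 𝒰 | c U = p}, fun U hU => hU.1, ?_, p, ?_⟩
    · have heq : #({U ∈ 𝒰 | c U = p} : Set (Set X)) = #{U : 𝒰 | c ↑U = p} :=
        Cardinal.mk_sep 𝒰 (fun U => c U = p)
      apply le_antisymm
      · rw [← h𝒰]
        exact Cardinal.mk_le_mk_of_subset (fun U hU => hU.1)
      · calc lam ≤ aleph 1 := hle1
          _ = Order.succ ℵ₀ := Cardinal.succ_aleph0.symm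
          _ ≤ #({U ∈ 𝒰 | c U = p} : Set (Set X)) := by
              rw [heq]; exact Order.succ_le_of_lt hp
    · rintro U ⟨hU, hcU⟩
      exact hcU ▸ hc U hU
end

section
/- If ℵ_ω < 𝔠, then ℵ_ω is not a precaliber* for the countably infinite discrete space (the natural numbers with the discrete topology); in particular there exists a countably infinite metrizable space X such that the caliber* cardinals of X are not exactly the uncountable cardinals. -/
/-!
Split `ℕ` into the infinitely many infinite fibres of `Nat.unpair`. Since `ℵ_n < 𝔠`, the `n`-th
fibre carries `ℵ_n` distinct non-empty subsets; together these form `ℵ_ω` open subsets of the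
discrete space `ℕ`. Sets from different fibres are disjoint, so a linked subfamily lies inside a
single fibre and has fewer than `ℵ_ω` members. Hence `ℵ_ω` is not even a weak precaliber* of `ℕ`,
and a fortiori not a caliber*, although it is uncountable.
-/

open Cardinal Set

universe u

open Ordinal

section Implications

variable {X : Type u} [TopologicalSpace X] {κ : Cardinal.{u}}

theorem IsCaliberStar.isPrecaliberStar (h : IsCaliberStar X κ) : IsPrecaliberStar X κ := by
  intro 𝒰 h𝒰 hopen hne
  obtain ⟨𝒱, h𝒱𝒰, h𝒱, x, hx⟩ := h 𝒰 h𝒰 hopen hne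
  exact ⟨𝒱, h𝒱𝒰, h𝒱, fun s hs _ => ⟨x, fun U hU => hx U (hs hU)⟩⟩

open Classical in
theorem IsPrecaliberStar.isWeakPrecaliberStar (h : IsPrecaliberStar X κ) :
    IsWeakPrecaliberStar X κ := by
  intro 𝒰 h𝒰 hopen hne
  obtain ⟨𝒱, h𝒱𝒰, h𝒱, hcentered⟩ := h 𝒰 h𝒰 hopen hne
  refine ⟨𝒱, h𝒱𝒰, h𝒱, fun U hU V hV => ?_⟩
  simpa using hcentered {U, V} (by simp [insert_subset_iff, hU, hV]) (by simp)

end Implications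

theorem subset_of_forall_inter_nonempty {X ι : Type*} {F : ι → Set (Set X)}
    (hF : Pairwise fun i j => ∀ U ∈ F i, ∀ V ∈ F j, Disjoint U V) {𝒱 : Set (Set X)}
    (h𝒱F : 𝒱 ⊆ ⋃ i, F i) (hlinked : ∀ U ∈ 𝒱, ∀ V ∈ 𝒱, (U ∩ V).Nonempty)
    {U : Set X} {i : ι} (hU : U ∈ 𝒱) (hUi : U ∈ F i) : 𝒱 ⊆ F i := by
  intro V hV
  obtain ⟨j, hVj⟩ := mem_iUnion.1 (h𝒱F hV)
  obtain rfl : i = j := by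
    by_contra hij
    exact (hlinked U hU V hV).ne_empty (hF hij U hUi V hVj).inter_eq
  exact hVj

theorem mk_iUnion_eq_aleph_omega0 {α : Type} (F : ℕ → Set α) (hF : ∀ n, #(F n) = ℵ_ n) :
    #(⋃ n, F n) = ℵ_ ω := by
  apply le_antisymm
  · calc #(⋃ n, F n) ≤ #ℕ * ⨆ n, #(F n) := mk_iUnion_le F
      _ ≤ ℵ₀ * ℵ_ ω := by
        rw [mk_nat]
        gcongr
        exact ciSup_le' fun n => (hF n).trans_le (aleph_le_aleph.2 (natCast_lt_omega0 n).le)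
      _ = ℵ_ ω := mul_eq_right (aleph0_le_aleph ω) (aleph0_le_aleph ω) aleph0_ne_zero
  · rw [aleph_limit isSuccLimit_omega0]
    refine ciSup_le' fun ⟨a, ha⟩ => ?_
    obtain ⟨n, rfl⟩ := lt_omega0.1 ha
    exact (hF n).symm.trans_le (mk_le_mk_of_subset (subset_iUnion F n))

namespace Nat

/-- Shifting `S` up and adding `0` keeps `S ↦ fiberSet n S` injective while making every value
non-empty. -/
def fiberSet (n : ℕ) (S : Set ℕ) : Set ℕ := pair n '' insert 0 (succ '' S)

theorem fiberSet_injective (n : ℕ) : Function.Injective (fiberSet n) := by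
  intro S T hST
  have hpair : Function.Injective (pair n) := fun a b hab => (pair_eq_pair.1 hab).2
  have hins : insert 0 (succ '' S) = insert 0 (succ '' T) := image_injective.2 hpair hST
  ext x
  simpa using congrArg (succ x ∈ ·) hins

theorem fiberSet_nonempty (n : ℕ) (S : Set ℕ) : (fiberSet n S).Nonempty :=
  ⟨pair n 0, mem_image_of_mem _ (mem_insert 0 _)⟩

theorem unpair_fst_of_mem_fiberSet {n x : ℕ} {S : Set ℕ} (hx : x ∈ fiberSet n S) :
    (unpair x).1 = n := by
  obtain ⟨y, -, rfl⟩ := hx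
  simp

theorem exists_family_in_unpair_fiber {κ : Cardinal.{0}} (hκ : κ ≤ 𝔠) (n : ℕ) :
    ∃ F : Set (Set ℕ), #F = κ ∧ ∀ S ∈ F, S.Nonempty ∧ ∀ x ∈ S, (unpair x).1 = n := by
  obtain ⟨T, hT⟩ : ∃ T : Set (Set ℕ), #T = κ := by
    rw [← le_mk_iff_exists_set, mk_set, mk_nat, two_power_aleph0]
    exact hκ
  refine ⟨fiberSet n '' T, by rw [mk_image_eq (fiberSet_injective n), hT], ?_⟩
  rintro _ ⟨S, -, rfl⟩
  exact ⟨fiberSet_nonempty n S, fun x hx => unpair_fst_of_mem_fiberSet hx⟩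

end Nat

theorem not_isWeakPrecaliberStar_nat_aleph_omega0 (h : ℵ_ ω < continuum.{0}) :
    ¬ IsWeakPrecaliberStar ℕ (ℵ_ ω) := by
  intro hweak
  have haleph (n : ℕ) : ℵ_ n < ℵ_ ω := aleph_lt_aleph.2 (natCast_lt_omega0 n)
  choose F hFcard hF using fun n : ℕ => Nat.exists_family_in_unpair_fiber ((haleph n).trans h).le n
  have hdisj : Pairwise fun n m => ∀ U ∈ F n, ∀ V ∈ F m, Disjoint U V :=
    fun n m hnm U hU V hV => disjoint_left.2 fun x hxU hxV =>
      hnm (((hF n U hU).2 x hxU).symm.trans ((hF m V hV).2 x hxV))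
  obtain ⟨𝒱, h𝒱F, h𝒱card, hlinked⟩ := hweak (⋃ n, F n) (mk_iUnion_eq_aleph_omega0 F hFcard)
    (fun U _ => isOpen_discrete U)
    (fun U hU => (hF _ U (mem_iUnion.1 hU).choose_spec).1)
  obtain ⟨U, hU⟩ : 𝒱.Nonempty := by
    rw [← nonempty_coe_sort, ← mk_ne_zero_iff, h𝒱card]
    exact (aleph_pos ω).ne'
  obtain ⟨n, hUn⟩ := mem_iUnion.1 (h𝒱F hU)
  have h𝒱le := mk_le_mk_of_subset (subset_of_forall_inter_nonempty hdisj h𝒱F hlinked hU hUn)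
  rw [h𝒱card, hFcard] at h𝒱le
  exact (haleph n).not_ge h𝒱le

open Ordinal in
theorem stmt15 (h : Cardinal.aleph ω < Cardinal.continuum.{0}) :
    ¬ IsPrecaliberStar ℕ (Cardinal.aleph ω) ∧
    ∃ (X : Type) (_ : TopologicalSpace X), TopologicalSpace.MetrizableSpace X ∧
      Countable X ∧ Infinite X ∧
      ¬ (∀ lam : Cardinal.{0}, ℵ₀ ≤ lam → (IsCaliberStar X lam ↔ ℵ₀ < lam)) := by
  have hpre : ¬ IsPrecaliberStar ℕ (ℵ_ ω) := fun hpre =>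
    not_isWeakPrecaliberStar_nat_aleph_omega0 h hpre.isWeakPrecaliberStar
  refine ⟨hpre, ℕ, inferInstance, inferInstance, inferInstance, inferInstance, fun hall => ?_⟩
  have huncountable : ℵ₀ < ℵ_ ω := aleph0_lt_aleph.2 omega0_pos
  exact hpre ((hall _ huncountable.le).2 huncountable).isPrecaliberStar
end

section
/- If κ is an uncountable cardinal with cf(κ) = ω, then there exists a compact T₁ topological space X such that o(X) = κ = |X|, κ is a caliber* for X, and κ is not a caliber for X. -/
open Cardinal Set

universe u

/-!
Take `X = A ⊕ ℕ` with `|A| = κ`, whose nonempty open sets are the cofinite sets and the subsets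
of `ℕ` with finite complement in `ℕ`. Only countably many open sets miss `A`, so a family of κ
nonempty open sets consists, up to countably many, of cofinite sets. If every point lay in fewer
than κ of them, then, writing κ as the limit of a sequence `c n < κ` (this is `cf κ = ω`), the
uncountably many points would give infinitely many points lying in at most `c n` members for a
single `n`; every cofinite set contains one of these points, so κ ≤ ℵ₀ · c n < κ.
Conversely, if `A` is well-ordered in type κ and `e n` is cofinal in `A`, the open sets
`{m ∈ ℕ | a < e m}`, `a ∈ A`, witness that κ is not a caliber: the point `m` lies only in those
indexed by `Iio (e m)`, of size `< κ`.
-/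

open Filter Topology

namespace Ordinal

theorem exists_nat_strictMono_cofinal {o : Ordinal.{u}} (h : o.cof = ℵ₀) :
    ∃ f : ℕ → Iio o, StrictMono f ∧ ∀ b, ∃ n, b < f n := by
  obtain ⟨f, hf⟩ := exists_isFundamentalSeq (o := o) (a := ω) (by rw [h, ord_aleph0])
  let g : ℕ → Iio (ω : Ordinal.{u}) := fun n => ⟨n, natCast_lt_omega0 n⟩
  have hg : StrictMono g := fun _ _ hmn => Subtype.mk_lt_mk.2 (Nat.cast_lt.2 hmn)
  refine ⟨f ∘ g, hf.strictMono.comp hg, fun b => ?_⟩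
  obtain ⟨_, ⟨⟨i, hi⟩, rfl⟩, hb⟩ := hf.isCofinal_range b
  obtain ⟨n, rfl⟩ := lt_omega0.1 hi
  exact ⟨n + 1, hb.trans_lt (hf.strictMono (hg n.lt_succ_self))⟩

end Ordinal

theorem Cardinal.exists_nat_seq_cofinal {κ : Cardinal.{u}} (h : κ.ord.cof = ℵ₀) :
    ∃ c : ℕ → Cardinal.{u}, (∀ n, c n < κ) ∧ ∀ μ < κ, ∃ n, μ ≤ c n := by
  obtain ⟨f, -, hf⟩ := Ordinal.exists_nat_strictMono_cofinal h
  refine ⟨fun n => (f n).1.card, fun n => lt_ord.1 (f n).2, fun μ hμ => ?_⟩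
  obtain ⟨n, hn⟩ := hf ⟨μ.ord, ord_lt_ord.2 hμ⟩
  exact ⟨n, ord_le.1 (le_of_lt hn)⟩

theorem Cardinal.mk_iUnion_nat_le {α : Type u} (s : ℕ → Set α) {μ : Cardinal.{u}}
    (h : ∀ n, #(s n) ≤ μ) : #(⋃ n, s n) ≤ ℵ₀ * μ := by
  have hunion := mk_iUnion_le_lift.{u, 0} s
  simp only [lift_id'.{u, 0}, mk_nat, lift_aleph0] at hunion
  exact hunion.trans (by gcongr; exact ciSup_le' h)

theorem Cardinal.mk_eq_of_countable_diff {α : Type u} {S T : Set α} (hTS : T ⊆ S)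
    (hS : ℵ₀ < #S) (hdiff : (S \ T).Countable) : #T = #S := by
  refine (mk_le_mk_of_subset hTS).antisymm (not_lt.1 fun hlt => ?_)
  have hsum := add_lt_of_lt hS.le (hdiff.le_aleph0.trans_lt hS) hlt
  rw [mk_sdiff_add_mk hTS] at hsum
  exact hsum.false

section

variable {X : Type u} [TopologicalSpace X]

theorem mk_le_oCard [T1Space X] : #X ≤ oCard X :=
  mk_le_of_injective (f := fun x : X => (⟨{x}ᶜ, isOpen_compl_singleton⟩ : {U : Set X | IsOpen U}))
    fun x y hxy => by simpa using congrArg Subtype.val hxy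

theorem CompactSpace.of_cofinite_le_nhds (x : X) (h : cofinite ≤ 𝓝 x) : CompactSpace X := by
  refine ⟨isCompact_iff_ultrafilter_le_nhds.2 fun f _ => ?_⟩
  rcases f.le_cofinite_or_eq_pure with hf | ⟨y, rfl⟩
  · exact ⟨x, mem_univ x, hf.trans h⟩
  · exact ⟨y, mem_univ y, pure_le_nhds y⟩

theorem not_isCaliber_of_forall_mk_lt {κ : Cardinal.{u}} {ι : Type u} (U : ι → Set X)
    (hι : #ι = κ) (hU : ∀ i, IsOpen (U i)) (hne : ∀ i, (U i).Nonempty)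
    (hsmall : ∀ x, #{i | x ∈ U i} < κ) : ¬ IsCaliber X κ := by
  intro hcal
  obtain ⟨J, hJ, x, hx⟩ := hcal U hι hU hne
  have hJx : J ⊆ {i | x ∈ U i} := fun i hi => mem_iInter₂.1 hx i hi
  exact ((mk_le_mk_of_subset hJx).trans_lt (hsmall x)).ne hJ

end

theorem exists_mk_sep_mem_eq_of_finite_compl {X : Type u} (hX : ℵ₀ < #X) {𝒯 : Set (Set X)}
    (hfin : ∀ t ∈ 𝒯, tᶜ.Finite) (h𝒯 : ℵ₀ < #𝒯) (hcof : (#𝒯).ord.cof = ℵ₀) :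
    ∃ x, #{t ∈ 𝒯 | x ∈ t} = #𝒯 := by
  obtain ⟨c, hc, hc_cofinal⟩ := exists_nat_seq_cofinal hcof
  by_contra! hne
  have hlt x : #{t ∈ 𝒯 | x ∈ t} < #𝒯 := (mk_le_mk_of_subset (sep_subset 𝒯 _)).lt_of_ne (hne x)
  obtain ⟨n, hn⟩ : ∃ n, {x | #{t ∈ 𝒯 | x ∈ t} ≤ c n}.Infinite := by
    by_contra! hfin'
    have hcount : (univ : Set X).Countable :=
      (countable_iUnion fun n => (hfin' n).countable).mono
        fun x _ => mem_iUnion.2 (hc_cofinal _ (hlt x))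
    exact hX.not_ge (by simpa using hcount.le_aleph0)
  let g := hn.natEmbedding
  have hcover : 𝒯 ⊆ ⋃ i, {t ∈ 𝒯 | (g i : X) ∈ t} := by
    intro t ht
    obtain ⟨i, hi⟩ :=
      ((hfin t ht).preimage (Subtype.val_injective.comp g.injective).injOn).exists_notMem
    exact mem_iUnion.2 ⟨i, ht, not_not.1 hi⟩
  have hle := (mk_le_mk_of_subset hcover).trans (mk_iUnion_nat_le _ fun i => (g i).2)
  exact hle.not_gt (mul_lt_of_lt h𝒯.le h𝒯 (hc n))

def CofiniteSum (A : Type u) : Type u := A ⊕ ULift.{u} ℕ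

namespace CofiniteSum

variable {A : Type u}

-- Around a point of `A` an open set must be cofinite, around a point of `ℕ` it must contain
-- all but finitely many points of `ℕ`.
instance : TopologicalSpace (CofiniteSum A) :=
  .mkOfNhds fun x => Sum.elim (fun _ => cofinite) (fun _ => map Sum.inr cofinite) x

instance : Infinite (CofiniteSum A) := inferInstanceAs (Infinite (A ⊕ ULift.{u} ℕ))

theorem isOpen_of_finite_compl {U : Set (CofiniteSum A)} (hU : Uᶜ.Finite) : IsOpen U := by
  rintro (a | n) -
  · exact hU
  · exact Sum.inr_injective.tendsto_cofinite hU

instance : T1Space (CofiniteSum A) :=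
  ⟨fun x => isOpen_compl_iff.1 (isOpen_of_finite_compl (by simp))⟩

instance [Nonempty A] : CompactSpace (CofiniteSum A) :=
  .of_cofinite_le_nhds (Sum.inl (Classical.arbitrary A))
    ((nhds_basis_opens _).ge_iff.2 fun _ ⟨hx, hU⟩ => hU _ hx)

theorem isOpen_cases {U : Set (CofiniteSum A)} (hU : IsOpen U) :
    U = ∅ ∨ Uᶜ.Finite ∨ ∃ F : Finset (ULift.{u} ℕ), U = Sum.inr '' (↑F)ᶜ := by
  rcases U.eq_empty_or_nonempty with h | ⟨x, hx⟩
  · exact .inl h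
  by_cases hA : ∃ a, Sum.inl a ∈ U
  · obtain ⟨a, ha⟩ := hA
    exact .inr (.inl (hU _ ha))
  have hsub : U ⊆ range Sum.inr := by
    rintro (a | n) h
    · exact absurd ⟨a, h⟩ hA
    · exact ⟨n, rfl⟩
  obtain ⟨n, rfl⟩ := hsub hx
  have hn : (Sum.inr ⁻¹' U)ᶜ.Finite := hU _ hx
  refine .inr (.inr ⟨hn.toFinset, ?_⟩)
  rw [Finite.coe_toFinset, compl_compl]
  exact (image_preimage_eq_of_subset hsub).symm

theorem mk_eq (hA : ℵ₀ ≤ #A) : #(CofiniteSum A) = #A := by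
  simpa [CofiniteSum, mk_sum] using Cardinal.add_eq_left hA hA

theorem oCard_eq : oCard (CofiniteSum A) = #(CofiniteSum A) := by
  refine le_antisymm ?_ mk_le_oCard
  have hsub : {U : Set (CofiniteSum A) | IsOpen U} ⊆ insert ∅
      (range (fun F : Finset (CofiniteSum A) => (↑F)ᶜ) ∪
        range (fun F : Finset (ULift.{u} ℕ) => (Sum.inr '' (↑F)ᶜ : Set (CofiniteSum A)))) := by
    intro U hU
    rcases isOpen_cases hU with rfl | hU | ⟨F, rfl⟩
    · exact mem_insert _ _
    · exact .inr (.inl ⟨hU.toFinset, by simp⟩)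
    · exact .inr (.inr ⟨F, rfl⟩)
  have hinf := aleph0_le_mk (CofiniteSum A)
  refine (mk_le_mk_of_subset hsub).trans (mk_insert_le.trans (add_le_of_le hinf ?_
    (one_le_aleph0.trans hinf)))
  refine (mk_union_le _ _).trans (add_le_of_le hinf ?_ ?_)
  · exact mk_range_le.trans (mk_finset_of_infinite _).le
  · exact mk_range_le.trans ((mk_finset_of_infinite _).trans_le (by simp))

theorem isCaliberStar (hA : ℵ₀ < #A) (hcof : (#A).ord.cof = ℵ₀) :
    IsCaliberStar (CofiniteSum A) #A := by
  intro 𝒰 h𝒰 hopen hne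
  set 𝒯 := {U ∈ 𝒰 | Uᶜ.Finite}
  have hrest : (𝒰 \ 𝒯).Countable := by
    refine ((countable_range fun F : Finset (ULift.{u} ℕ) =>
      (Sum.inr '' (↑F)ᶜ : Set (CofiniteSum A)))).mono fun U ⟨hU, hU𝒯⟩ => ?_
    rcases isOpen_cases (hopen U hU) with h | h | h
    · exact absurd h (hne U hU).ne_empty
    · exact absurd ⟨hU, h⟩ hU𝒯
    · obtain ⟨F, rfl⟩ := h
      exact ⟨F, rfl⟩
  have h𝒯 : #𝒯 = #A := (mk_eq_of_countable_diff (sep_subset _ _) (h𝒰 ▸ hA) hrest).trans h𝒰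
  obtain ⟨x, hx⟩ := exists_mk_sep_mem_eq_of_finite_compl (by rwa [mk_eq hA.le])
    (fun t ht => ht.2) (h𝒯 ▸ hA) (h𝒯 ▸ hcof)
  exact ⟨{t ∈ 𝒯 | x ∈ t}, fun t ht => ht.1.1, hx.trans h𝒯, x, fun t ht => ht.2⟩

theorem not_isCaliber [Preorder A] (e : ℕ → A) (he : Monotone e) (he_cofinal : ∀ a, ∃ n, a < e n)
    (hsmall : ∀ n, #(Iio (e n)) < #A) : ¬ IsCaliber (CofiniteSum A) #A := by
  refine not_isCaliber_of_forall_mk_lt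
    (fun a => (Sum.inr '' {n | a < e n.down} : Set (CofiniteSum A))) rfl ?_ ?_ ?_
  · rintro a _ ⟨n, -, rfl⟩
    obtain ⟨N, hN⟩ := he_cofinal a
    show (Sum.inr ⁻¹' (Sum.inr '' {n : ULift.{u} ℕ | a < e n.down}))ᶜ.Finite
    rw [preimage_image_eq _ Sum.inr_injective]
    refine ((finite_Iio N).preimage ULift.down_injective.injOn).subset fun m hm => ?_
    exact lt_of_not_ge fun hNm => hm (hN.trans_le (he hNm))
  · intro a
    obtain ⟨N, hN⟩ := he_cofinal a
    exact ⟨_, ⟨N⟩, hN, rfl⟩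
  · rintro (a | n)
    · convert zero_le.trans_lt (hsmall 0)
      exact mk_eq_zero_iff.2 ⟨fun ⟨_, _, _, h⟩ => Sum.inr_ne_inl h⟩
    · convert hsmall n.down using 3
      ext i
      exact ⟨fun ⟨m, hm, h⟩ => Sum.inr_injective h ▸ hm, fun h => ⟨n, h, rfl⟩⟩

end CofiniteSum

theorem stmt18 (κ : Cardinal.{u}) (hκ : ℵ₀ < κ) (hcof : κ.ord.cof = ℵ₀) :
    ∃ (X : Type u) (_ : TopologicalSpace X), CompactSpace X ∧ T1Space X ∧
      oCard X = κ ∧ #X = κ ∧ IsCaliberStar X κ ∧ ¬ IsCaliber X κ := by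
  set A := κ.ord.ToType
  have hA : #A = κ := by simp [A]
  have : Nonempty A := mk_ne_zero_iff.1 (hA ▸ (aleph0_pos.trans hκ).ne')
  have hX : #(CofiniteSum A) = κ := (CofiniteSum.mk_eq (hA ▸ hκ.le)).trans hA
  obtain ⟨f, hf, hf_cofinal⟩ := Ordinal.exists_nat_strictMono_cofinal hcof
  refine ⟨CofiniteSum A, inferInstance, inferInstance, inferInstance,
    CofiniteSum.oCard_eq.trans hX, hX, ?_, ?_⟩
  · rw [← hA] at hκ hcof ⊢
    exact CofiniteSum.isCaliberStar hκ hcof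
  · rw [← hA]
    refine CofiniteSum.not_isCaliber (Ordinal.ToType.mk ∘ f)
      (Ordinal.ToType.mk.strictMono.comp hf).monotone (fun a => ?_) (fun n => mk_Iio_lt _ ?_)
    · obtain ⟨n, hn⟩ := hf_cofinal (Ordinal.ToType.mk.symm a)
      exact ⟨n, Ordinal.ToType.mk.symm_apply_lt.1 hn⟩
    · simp [A]
end
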